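/- arXiv:2309.11429 — 5 statements merged into one kernel-verified Lean document; each statement's English description precedes it below -/
import Mathlib

section
/- Let k ≥ 1, let P be a nonzero measure on a product 𝒳₁ × … × 𝒳ₖ of finite sets, let α ∈ (0,1), and let j ∈ [k]. If θ is the Dirac weight concentrated at j (θ(j) = 1 and θ(i) = 0 for i ≠ j), then H_{α,θ}(P) = H_α(P_j), the Rényi entropy of order α of the j-th marginal of P. -/
open Finset

noncomputable section

/-- A probability distribution on a finite set. -/
def probVec {X : Type*} [Fintype X] (Q : X → ℝ) : Prop :=
  (∀ x, 0 ≤ Q x) ∧ ∑ x, Q x = 1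

/-- Shannon entropy (base 2) of a measure on a finite set; `0 · log 0 = 0`. -/
def shEnt {X : Type*} [Fintype X] (Q : X → ℝ) : ℝ :=
  -∑ x, Q x * Real.logb 2 (Q x)

/-- Kullback–Leibler divergence (base 2); terms with `Q x = 0` vanish. -/
def klD {X : Type*} [Fintype X] (Q P : X → ℝ) : ℝ :=
  ∑ x, Q x * Real.logb 2 (Q x / P x)

/-- `j`-th marginal of a measure on a finite product. -/
def marg {k : ℕ} {𝒳 : Fin k → Type*} [∀ j, Fintype (𝒳 j)] [∀ j, DecidableEq (𝒳 j)]
    (P : (∀ j, 𝒳 j) → ℝ) (j : Fin k) : 𝒳 j → ℝ :=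
  fun a => ∑ x : ∀ i, 𝒳 i, if x j = a then P x else 0

/-- The functional `H_{α,θ}(P)`. -/
def Hat {k : ℕ} {𝒳 : Fin k → Type*} [∀ j, Fintype (𝒳 j)] [∀ j, DecidableEq (𝒳 j)]
    (α : ℝ) (θ : Fin k → ℝ) (P : (∀ j, 𝒳 j) → ℝ) : ℝ :=
  sSup { v : ℝ | ∃ Q : (∀ j, 𝒳 j) → ℝ, probVec Q ∧ (∀ x, P x = 0 → Q x = 0) ∧
    v = (∑ j, θ j * shEnt (marg Q j)) - α / (1 - α) * klD Q P }

/-- Rényi entropy of order `α` of a measure on a finite set. -/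
def renyiEnt {X : Type*} [Fintype X] (α : ℝ) (μ : X → ℝ) : ℝ :=
  (1 / (1 - α)) * Real.logb 2 (∑ x, μ x ^ α)

section helpers
variable {k : ℕ} {𝒳 : Fin k → Type*} [∀ i, Fintype (𝒳 i)] [∀ i, DecidableEq (𝒳 i)]

lemma marg_nonneg {P : (∀ i, 𝒳 i) → ℝ} (hP : ∀ x, 0 ≤ P x) (j : Fin k) (a : 𝒳 j) :
    0 ≤ marg P j a :=
  Finset.sum_nonneg fun x _ => by by_cases h : x j = a <;> simp [h, hP x]

lemma le_marg {P : (∀ i, 𝒳 i) → ℝ} (hP : ∀ x, 0 ≤ P x) (j : Fin k) (x : ∀ i, 𝒳 i) :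
    P x ≤ marg P j (x j) := by
  have h := Finset.single_le_sum (f := fun y : ∀ i, 𝒳 i => if y j = x j then P y else 0)
    (fun y _ => by by_cases h : y j = x j <;> simp [h, hP y]) (Finset.mem_univ x)
  simpa [marg] using h

lemma sum_mul_marg (f : (∀ i, 𝒳 i) → ℝ) (j : Fin k) (g : 𝒳 j → ℝ) :
    ∑ a, g a * marg f j a = ∑ x, g (x j) * f x := by
  unfold marg
  simp_rw [Finset.mul_sum, mul_ite, mul_zero]
  rw [Finset.sum_comm]
  refine Finset.sum_congr rfl fun x _ => ?_
  have hc : ∀ a : 𝒳 j, (if x j = a then g a * f x else 0)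
      = (if x j = a then g (x j) * f x else 0) := by
    intro a; by_cases h : x j = a <;> simp [h]
  rw [Finset.sum_congr rfl fun a _ => hc a, Finset.sum_ite_eq]
  simp

lemma sum_marg (f : (∀ i, 𝒳 i) → ℝ) (j : Fin k) : ∑ a, marg f j a = ∑ x, f x := by
  simpa using sum_mul_marg f j (fun _ => 1)

lemma marg_smul (f : (∀ i, 𝒳 i) → ℝ) (j : Fin k) (g : 𝒳 j → ℝ) (a : 𝒳 j) :
    marg (fun x => g (x j) * f x) j a = g a * marg f j a := by
  unfold marg
  rw [Finset.mul_sum]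
  refine Finset.sum_congr rfl fun x _ => ?_
  by_cases h : x j = a <;> simp [h]

end helpers

lemma gibbs {X : Type*} [Fintype X] {w h : X → ℝ} (hw : ∀ x, 0 ≤ w x) (hsum : ∑ x, w x = 1)
    (hh : ∀ x, w x ≠ 0 → 0 < h x) :
    ∑ x, w x * Real.logb 2 (h x) ≤ Real.logb 2 (∑ x, w x * h x) := by
  have h2 : (0:ℝ) < Real.log 2 := Real.log_pos one_lt_two
  set t := Finset.univ.filter fun x : X => w x ≠ 0 with ht
  have hw1 : ∑ x ∈ t, w x = 1 := by rw [ht, Finset.sum_filter_ne_zero]; exact hsum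
  have key : ∑ x ∈ t, w x * Real.log (h x) ≤ Real.log (∑ x ∈ t, w x * h x) := by
    have := (strictConcaveOn_log_Ioi.concaveOn).le_map_sum
      (t := t) (w := w) (p := h)
      (fun i _ => hw i) hw1
      (fun i hi => hh i (by simpa [ht] using hi))
    simpa [smul_eq_mul] using this
  have e1 : ∑ x, w x * Real.log (h x) = ∑ x ∈ t, w x * Real.log (h x) := by
    rw [ht]; symm; apply Finset.sum_filter_of_ne; intro x _ hne
    intro h0; apply hne; rw [h0, zero_mul]
  have e2 : ∑ x, w x * h x = ∑ x ∈ t, w x * h x := by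
    rw [ht]; symm; apply Finset.sum_filter_of_ne; intro x _ hne
    intro h0; apply hne; rw [h0, zero_mul]
  simp only [Real.logb, ← mul_div_assoc]
  rw [← Finset.sum_div, e1, e2]
  exact div_le_div_of_nonneg_right key h2.le

lemma logb_rpow' {t : ℝ} (ht : 0 < t) (β : ℝ) :
    Real.logb 2 (t ^ β) = β * Real.logb 2 t :=
  Real.logb_rpow_eq_mul_logb_of_pos ht


/-- if `θ` is the Dirac weight at `j`, then `H_{α,θ}(P)` equals the
Rényi entropy of order `α` of the `j`-th marginal of `P`. -/
theorem stmt0 {k : ℕ} (hk : 1 ≤ k) (𝒳 : Fin k → Type)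
    [∀ i, Fintype (𝒳 i)] [∀ i, DecidableEq (𝒳 i)]
    (P : (∀ i, 𝒳 i) → ℝ) (hP0 : ∀ x, 0 ≤ P x) (hPne : P ≠ 0)
    (α : ℝ) (hα : α ∈ Set.Ioo (0 : ℝ) 1) (j : Fin k)
    (θ : Fin k → ℝ) (hθ : θ = fun i => if i = j then 1 else 0) :
    Hat α θ P = renyiEnt α (marg P j) := by
  obtain ⟨hα0, hα1⟩ := hα
  have h1α : (0:ℝ) < 1 - α := by linarith
  have hαne : α ≠ 0 := ne_of_gt hα0
  set μ : 𝒳 j → ℝ := marg P j with hμ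
  have hμ0 : ∀ a, 0 ≤ μ a := marg_nonneg hP0 j
  set Z : ℝ := ∑ a, μ a ^ α with hZ
  have hZ0 : ∀ a : 𝒳 j, 0 ≤ μ a ^ α := fun a => Real.rpow_nonneg (hμ0 a) α
  obtain ⟨x₀, hx₀⟩ : ∃ x, P x ≠ 0 := by
    by_contra hc; push_neg at hc; exact hPne (funext hc)
  have hx₀' : 0 < P x₀ := lt_of_le_of_ne (hP0 x₀) (Ne.symm hx₀)
  have hμx₀ : 0 < μ (x₀ j) := lt_of_lt_of_le hx₀' (le_marg hP0 j x₀)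
  have hZpos : 0 < Z := Finset.sum_pos' (fun a _ => hZ0 a)
    ⟨x₀ j, Finset.mem_univ _, Real.rpow_pos_of_pos hμx₀ α⟩
  have hZne : Z ≠ 0 := ne_of_gt hZpos
  have hRdef : renyiEnt α μ = 1/(1-α) * Real.logb 2 Z := rfl
  have hrp : ∀ a : 𝒳 j, μ a ^ (α-1) * μ a = μ a ^ α := by
    intro a
    rcases eq_or_lt_of_le (hμ0 a) with h|h
    · rw [← h, Real.zero_rpow (by intro hc; apply hαne; linarith [sub_eq_zero.mp hc] : α - 1 ≠ 0),
        Real.zero_rpow hαne, zero_mul]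
    · nth_rewrite 2 [← Real.rpow_one (μ a)]
      rw [← Real.rpow_add h]; ring_nf
  have hsum1 : ∑ a : 𝒳 j, μ a ^ α / Z = 1 := by
    rw [← Finset.sum_div, ← hZ, div_self hZne]
  have hθsum : ∀ Q : (∀ i, 𝒳 i) → ℝ,
      (∑ i, θ i * shEnt (marg Q i)) = shEnt (marg Q j) := by
    intro Q
    subst hθ
    simp [ite_mul, Finset.sum_ite_eq']
  apply IsGreatest.csSup_eq
  constructor
  · -- membership: the optimizer
    set Qs : (∀ i, 𝒳 i) → ℝ := fun x => μ (x j) ^ (α-1) / Z * P x with hQs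
    have hQs0 : ∀ x, 0 ≤ Qs x := fun x =>
      mul_nonneg (div_nonneg (Real.rpow_nonneg (hμ0 _) _) hZpos.le) (hP0 x)
    have hmargQs : ∀ a, marg Qs j a = μ a ^ α / Z := by
      intro a
      rw [hQs, marg_smul P j (fun a => μ a ^ (α-1) / Z) a, div_mul_eq_mul_div, ← hμ, hrp a]
    have hQssum : ∑ x, Qs x = 1 := by
      rw [← sum_marg Qs j, Finset.sum_congr rfl fun a _ => hmargQs a, hsum1]
    refine ⟨Qs, ⟨hQs0, hQssum⟩, fun x hx => by simp [hQs, hx], ?_⟩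
    rw [hθsum Qs]
    have hklQs : klD Qs P = ∑ a, Real.logb 2 (μ a ^ (α-1) / Z) * (μ a ^ α / Z) := by
      have step : ∀ x : ∀ i, 𝒳 i, Qs x * Real.logb 2 (Qs x / P x)
          = (fun a => Real.logb 2 (μ a ^ (α-1) / Z)) (x j) * Qs x := by
        intro x
        show Qs x * Real.logb 2 (Qs x / P x) = Real.logb 2 (μ (x j) ^ (α-1) / Z) * Qs x
        rcases eq_or_lt_of_le (hP0 x) with hpx|hpx
        · have : Qs x = 0 := by simp [hQs, ← hpx]
          simp [this]
        · have hqsp : Qs x / P x = μ (x j) ^ (α-1) / Z := by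
            simp only [hQs]
            rw [mul_div_assoc, div_self (ne_of_gt hpx), mul_one]
          rw [hqsp, mul_comm]
      rw [klD, Finset.sum_congr rfl fun x _ => step x,
        ← sum_mul_marg Qs j (fun a => Real.logb 2 (μ a ^ (α-1) / Z))]
      exact Finset.sum_congr rfl fun a _ => by rw [hmargQs a]
    have hshQs : shEnt (marg Qs j) = -∑ a, (μ a ^ α / Z) * Real.logb 2 (μ a ^ α / Z) := by
      rw [shEnt]
      congr 1
      exact Finset.sum_congr rfl fun a _ => by rw [hmargQs a]
    rw [hshQs, hklQs]
    have key : ∀ a : 𝒳 j, -((μ a ^ α / Z) * Real.logb 2 (μ a ^ α / Z))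
        - α/(1-α) * (Real.logb 2 (μ a ^ (α-1) / Z) * (μ a ^ α / Z))
        = (μ a ^ α / Z) * (1/(1-α) * Real.logb 2 Z) := by
      intro a
      rcases eq_or_lt_of_le (hμ0 a) with h|h
      · rw [← h, Real.zero_rpow hαne]
        simp
      · have h1 : Real.logb 2 (μ a ^ α / Z) = α * Real.logb 2 (μ a) - Real.logb 2 Z := by
          rw [Real.logb_div (ne_of_gt (Real.rpow_pos_of_pos h α)) hZne, logb_rpow' h]
        have h2 : Real.logb 2 (μ a ^ (α-1) / Z) = (α-1) * Real.logb 2 (μ a) - Real.logb 2 Z := by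
          rw [Real.logb_div (ne_of_gt (Real.rpow_pos_of_pos h (α-1))) hZne, logb_rpow' h]
        rw [h1, h2]
        field_simp
        ring
    rw [hRdef]
    calc (1:ℝ)/(1-α) * Real.logb 2 Z
        = (∑ a, μ a ^ α / Z) * (1/(1-α) * Real.logb 2 Z) := by rw [hsum1, one_mul]
      _ = ∑ a, (μ a ^ α / Z) * (1/(1-α) * Real.logb 2 Z) := by rw [Finset.sum_mul]
      _ = ∑ a, (-((μ a ^ α / Z) * Real.logb 2 (μ a ^ α / Z))
            - α/(1-α) * (Real.logb 2 (μ a ^ (α-1) / Z) * (μ a ^ α / Z))) :=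
          (Finset.sum_congr rfl fun a _ => (key a).symm)
      _ = (-∑ a, (μ a ^ α / Z) * Real.logb 2 (μ a ^ α / Z))
            - α/(1-α) * ∑ a, Real.logb 2 (μ a ^ (α-1) / Z) * (μ a ^ α / Z) := by
          rw [Finset.sum_sub_distrib, Finset.sum_neg_distrib, Finset.mul_sum]
  · -- upper bound
    rintro v ⟨Q, ⟨hQ0, hQ1⟩, habs, rfl⟩
    rw [hθsum Q, hRdef]
    set qm : 𝒳 j → ℝ := marg Q j with hqm
    have hqm0 : ∀ a, 0 ≤ qm a := marg_nonneg hQ0 j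
    have hQle : ∀ x, Q x ≤ qm (x j) := le_marg hQ0 j
    have hQP : ∀ x, Q x ≠ 0 → 0 < P x := fun x hx =>
      lt_of_le_of_ne (hP0 x) (fun h => hx (habs x h.symm))
    set h : (∀ i, 𝒳 i) → ℝ := fun x => (P x / Q x) ^ α * (qm (x j)) ^ (α-1) with hh
    have hhnn : ∀ x, 0 ≤ h x := fun x =>
      mul_nonneg (Real.rpow_nonneg (div_nonneg (hP0 x) (hQ0 x)) α)
        (Real.rpow_nonneg (hqm0 _) _)
    have hhpos : ∀ x, Q x ≠ 0 → 0 < h x := by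
      intro x hx
      have hQx : 0 < Q x := lt_of_le_of_ne (hQ0 x) (Ne.symm hx)
      exact mul_pos (Real.rpow_pos_of_pos (div_pos (hQP x hx) hQx) α)
        (Real.rpow_pos_of_pos (lt_of_lt_of_le hQx (hQle x)) _)
    -- pointwise AM-GM bound
    have claim : ∀ x, Q x * h x
        ≤ (1-α) * (μ (x j) ^ α / qm (x j) * Q x) + α * (μ (x j) ^ (α-1) * P x) := by
      intro x
      by_cases hq : Q x = 0
      · rw [hq, zero_mul]
        have : (0:ℝ) ≤ μ (x j) ^ α / qm (x j) * Q x :=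
          mul_nonneg (div_nonneg (hZ0 _) (hqm0 _)) (hQ0 x)
        have h2 : (0:ℝ) ≤ μ (x j) ^ (α-1) * P x :=
          mul_nonneg (Real.rpow_nonneg (hμ0 _) _) (hP0 x)
        nlinarith
      · have hQx : 0 < Q x := lt_of_le_of_ne (hQ0 x) (Ne.symm hq)
        have hPx : 0 < P x := hQP x hq
        have hqmx : 0 < qm (x j) := lt_of_lt_of_le hQx (hQle x)
        have hμx : 0 < μ (x j) := lt_of_lt_of_le hPx (le_marg hP0 j x)
        have amgm := Real.geom_mean_le_arith_mean2_weighted h1α.le hα0.le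
          (div_nonneg hQx.le hqmx.le) (div_nonneg hPx.le hμx.le) (by ring)
        have hmul := mul_le_mul_of_nonneg_right amgm (hZ0 (x j))
        have heq : Q x * h x = (Q x / qm (x j)) ^ (1-α) * (P x / μ (x j)) ^ α * μ (x j) ^ α := by
          simp only [hh]
          rw [Real.div_rpow hQx.le hqmx.le, Real.div_rpow hPx.le hμx.le,
            Real.div_rpow hPx.le hQx.le]
          rw [show α - 1 = -(1-α) by ring, Real.rpow_neg hqmx.le]
          have eQ : Q x ^ ((1:ℝ)-α) = Q x / Q x ^ α := by
            rw [Real.rpow_sub hQx, Real.rpow_one]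
          rw [eQ]
          have n1 : Q x ^ α ≠ 0 := (Real.rpow_pos_of_pos hQx α).ne'
          have n2 : qm (x j) ^ ((1:ℝ)-α) ≠ 0 := (Real.rpow_pos_of_pos hqmx _).ne'
          have n3 : μ (x j) ^ α ≠ 0 := (Real.rpow_pos_of_pos hμx α).ne'
          field_simp
        have heq2 : ((1-α) * (Q x / qm (x j)) + α * (P x / μ (x j))) * μ (x j) ^ α
            = (1-α) * (μ (x j) ^ α / qm (x j) * Q x) + α * (μ (x j) ^ (α-1) * P x) := by
          have e2 : μ (x j) ^ (α-1) = μ (x j) ^ α / μ (x j) := by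
            rw [Real.rpow_sub hμx, Real.rpow_one]
          rw [e2]
          field_simp
        calc Q x * h x = (Q x / qm (x j)) ^ (1-α) * (P x / μ (x j)) ^ α * μ (x j) ^ α := heq
          _ ≤ ((1-α) * (Q x / qm (x j)) + α * (P x / μ (x j))) * μ (x j) ^ α := hmul
          _ = _ := heq2
    have hbound : ∑ x, Q x * h x ≤ Z := by
      have s1 : ∑ x, μ (x j) ^ α / qm (x j) * Q x = ∑ a, (μ a ^ α / qm a) * qm a := by
        rw [← sum_mul_marg Q j (fun a => μ a ^ α / qm a)]
      have s1le : ∑ a, (μ a ^ α / qm a) * qm a ≤ Z := by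
        rw [hZ]
        refine Finset.sum_le_sum fun a _ => ?_
        by_cases hq : qm a = 0
        · rw [hq, mul_zero]; exact hZ0 a
        · rw [div_mul_cancel₀ _ hq]
      have s2 : ∑ x, μ (x j) ^ (α-1) * P x = Z := by
        rw [← sum_mul_marg P j (fun a => μ a ^ (α-1)), ← hμ, hZ]
        exact Finset.sum_congr rfl fun a _ => hrp a
      calc ∑ x, Q x * h x
          ≤ ∑ x, ((1-α) * (μ (x j) ^ α / qm (x j) * Q x) + α * (μ (x j) ^ (α-1) * P x)) :=
            Finset.sum_le_sum fun x _ => claim x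
        _ = (1-α) * ∑ x, μ (x j) ^ α / qm (x j) * Q x + α * ∑ x, μ (x j) ^ (α-1) * P x := by
            rw [Finset.sum_add_distrib, ← Finset.mul_sum, ← Finset.mul_sum]
        _ ≤ (1-α) * Z + α * Z := by
            have := mul_le_mul_of_nonneg_left (s1 ▸ s1le) h1α.le
            rw [s2]
            nlinarith [this]
        _ = Z := by ring
    have hspos : 0 < ∑ x, Q x * h x := by
      obtain ⟨x₁, hx₁⟩ : ∃ x, Q x ≠ 0 := by
        by_contra hc; push_neg at hc
        rw [Finset.sum_congr rfl fun x _ => hc x] at hQ1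
        simpa using hQ1
      exact Finset.sum_pos' (fun x _ => mul_nonneg (hQ0 x) (hhnn x))
        ⟨x₁, Finset.mem_univ _, mul_pos (lt_of_le_of_ne (hQ0 x₁) (Ne.symm hx₁)) (hhpos x₁ hx₁)⟩
    -- the chain
    have e1 : shEnt qm = -∑ x, Real.logb 2 (qm (x j)) * Q x := by
      rw [shEnt, ← sum_mul_marg Q j (fun a => Real.logb 2 (qm a)), ← hqm]
      congr 1
      exact Finset.sum_congr rfl fun a _ => mul_comm _ _
    have hca : (1-α) * (α/(1-α)) = α := by field_simp
    have perterm : ∀ x, (1-α) * (-(Real.logb 2 (qm (x j)) * Q x))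
        - α * (Q x * Real.logb 2 (Q x / P x)) = Q x * Real.logb 2 (h x) := by
      intro x
      by_cases hq : Q x = 0
      · simp [hq]
      · have hQx : 0 < Q x := lt_of_le_of_ne (hQ0 x) (Ne.symm hq)
        have hPx : 0 < P x := hQP x hq
        have hqmx : 0 < qm (x j) := lt_of_lt_of_le hQx (hQle x)
        have hlh : Real.logb 2 (h x)
            = α * (Real.logb 2 (P x) - Real.logb 2 (Q x)) + (α-1) * Real.logb 2 (qm (x j)) := by
          rw [hh]
          rw [Real.logb_mul (ne_of_gt (Real.rpow_pos_of_pos (div_pos hPx hQx) α))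
            (ne_of_gt (Real.rpow_pos_of_pos hqmx _)),
            logb_rpow' (div_pos hPx hQx), logb_rpow' hqmx,
            Real.logb_div hPx.ne' hQx.ne']
        rw [hlh, Real.logb_div hQx.ne' hPx.ne']
        ring
    have chain : (1-α) * (shEnt qm - α/(1-α) * klD Q P) ≤ Real.logb 2 Z := by
      calc (1-α) * (shEnt qm - α/(1-α) * klD Q P)
          = (1-α) * shEnt qm - α * klD Q P := by
            rw [mul_sub, ← mul_assoc, hca]
        _ = ∑ x, ((1-α) * (-(Real.logb 2 (qm (x j)) * Q x))
              - α * (Q x * Real.logb 2 (Q x / P x))) := by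
            rw [e1, klD, Finset.sum_sub_distrib, ← Finset.mul_sum, ← Finset.mul_sum,
              Finset.sum_neg_distrib]
        _ = ∑ x, Q x * Real.logb 2 (h x) := Finset.sum_congr rfl fun x _ => perterm x
        _ ≤ Real.logb 2 (∑ x, Q x * h x) := gibbs hQ0 hQ1 hhpos
        _ ≤ Real.logb 2 Z := Real.logb_le_logb_of_le one_lt_two hspos hbound
    have hfin : shEnt qm - α/(1-α) * klD Q P ≤ Real.logb 2 Z / (1-α) := by
      rw [le_div_iff₀ h1α]
      linarith [chain]
    calc shEnt qm - α/(1-α) * klD Q P ≤ Real.logb 2 Z / (1-α) := hfin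
      _ = 1/(1-α) * Real.logb 2 Z := by ring
end
end

section
/- Let k ≥ 1, α ∈ (0,1), θ ∈ Δ([k]), and let P be a nonzero measure on a product 𝒳₁ × … × 𝒳ₖ of finite sets. For each j ∈ [k], let (I_{j,1}, …, I_{j,m_j}) be a partition of 𝒳_j into m_j pairwise disjoint (possibly empty) subsets. Then H_{α,θ}(P) ≤ Σ_{j=1}^k θ(j) log₂ m_j + (α/(1−α)) Σ_{j=1}^k log₂ m_j + max over tuples (i₁,…,i_k) with P(I_{1,i₁} × … × I_{k,i_k}) > 0 of [ Σ_{j=1}^k θ(j) log₂ |I_{j,i_j}| + (α/(1−α)) log₂ P(I_{1,i₁} × … × I_{k,i_k}) ], where P(S) denotes Σ_{x ∈ S} P(x) for S ⊆ 𝒳₁ × … × 𝒳ₖ. -/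
open Finset

noncomputable section

/-- Log-sum inequality for `Real.log`. -/
lemma logSumIneq {ι : Type*} (s : Finset ι) (a b : ι → ℝ)
    (ha : ∀ i ∈ s, 0 ≤ a i) (hb : ∀ i ∈ s, 0 ≤ b i)
    (hab : ∀ i ∈ s, 0 < a i → 0 < b i)
    (hA : 0 < ∑ i ∈ s, a i) :
    (∑ i ∈ s, a i) * Real.log ((∑ i ∈ s, a i) / (∑ i ∈ s, b i)) ≤
      ∑ i ∈ s, a i * Real.log (a i / b i) := by
  classical
  set A := ∑ i ∈ s, a i with hAdef
  set B := ∑ i ∈ s, b i with hBdef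
  set t := s.filter (fun i => 0 < a i) with htdef
  have hts : t ⊆ s := filter_subset _ _
  have hAt : ∑ i ∈ t, a i = A := by
    rw [hAdef, htdef]
    exact Finset.sum_filter_of_ne (fun i hi hne => lt_of_le_of_ne (ha i hi) (Ne.symm hne))
  have htne : t.Nonempty :=
    Finset.nonempty_of_sum_ne_zero (f := a) (by rw [hAt]; exact hA.ne')
  have hBt : 0 < ∑ i ∈ t, b i := by
    apply Finset.sum_pos _ htne
    intro i hi
    rw [htdef, mem_filter] at hi
    exact hab i hi.1 hi.2
  have hBtB : ∑ i ∈ t, b i ≤ B := by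
    rw [hBdef]; exact Finset.sum_le_sum_of_subset_of_nonneg hts (fun i hi _ => hb i hi)
  -- Jensen
  have hJ : ∑ i ∈ t, (a i / A) * Real.log (b i / a i) ≤
      Real.log (∑ i ∈ t, (a i / A) * (b i / a i)) := by
    have := strictConcaveOn_log_Ioi.concaveOn.le_map_sum (t := t)
      (w := fun i => a i / A) (p := fun i => b i / a i)
      (fun i _ => div_nonneg (ha i (hts ‹_›)) hA.le)
      (by rw [← Finset.sum_div, hAt, div_self hA.ne'])
      (fun i hi => by
        rw [htdef, mem_filter] at hi
        exact Set.mem_Ioi.mpr (div_pos (hab i hi.1 hi.2) hi.2))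
    simpa using this
  have hsum : ∑ i ∈ t, (a i / A) * (b i / a i) = (∑ i ∈ t, b i) / A := by
    rw [Finset.sum_div]
    apply Finset.sum_congr rfl
    intro i hi
    rw [htdef, mem_filter] at hi
    rw [div_mul_div_comm, mul_comm A (a i), mul_div_mul_left _ _ hi.2.ne']
  rw [hsum] at hJ
  have hJ2 : ∑ i ∈ t, (a i / A) * Real.log (b i / a i) ≤ Real.log (B / A) := by
    refine hJ.trans (Real.log_le_log (div_pos hBt hA) ?_)
    gcongr
  -- multiply by A
  have hJ3 : ∑ i ∈ t, a i * Real.log (b i / a i) ≤ A * Real.log (B / A) := by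
    have := mul_le_mul_of_nonneg_left hJ2 hA.le
    calc ∑ i ∈ t, a i * Real.log (b i / a i)
        = A * ∑ i ∈ t, (a i / A) * Real.log (b i / a i) := by
          rw [Finset.mul_sum]
          apply Finset.sum_congr rfl
          intro i _; field_simp
      _ ≤ A * Real.log (B / A) := this
  have hflip : ∑ i ∈ s, a i * Real.log (a i / b i) = -∑ i ∈ t, a i * Real.log (b i / a i) := by
    rw [← Finset.sum_neg_distrib]
    rw [show (∑ i ∈ s, a i * Real.log (a i / b i)) =
        ∑ i ∈ t, a i * Real.log (a i / b i) from
      (Finset.sum_filter_of_ne (fun i hi hne => by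
        by_contra hc
        push_neg at hc
        have : a i = 0 := le_antisymm hc (ha i hi)
        simp [this] at hne)).symm]
    apply Finset.sum_congr rfl
    intro i hi
    rw [htdef, mem_filter] at hi
    rw [show a i / b i = (b i / a i)⁻¹ by rw [inv_div], Real.log_inv]
    ring
  rw [hflip]
  rw [show A * Real.log (A / B) = -(A * Real.log (B / A)) by
    rw [show A / B = (B / A)⁻¹ by rw [inv_div], Real.log_inv]; ring]
  exact neg_le_neg hJ3

/-- Log-sum inequality for `Real.logb 2`. -/
lemma logbSumIneq {ι : Type*} (s : Finset ι) (a b : ι → ℝ)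
    (ha : ∀ i ∈ s, 0 ≤ a i) (hb : ∀ i ∈ s, 0 ≤ b i)
    (hab : ∀ i ∈ s, 0 < a i → 0 < b i)
    (hA : 0 < ∑ i ∈ s, a i) :
    (∑ i ∈ s, a i) * Real.logb 2 ((∑ i ∈ s, a i) / (∑ i ∈ s, b i)) ≤
      ∑ i ∈ s, a i * Real.logb 2 (a i / b i) := by
  have h := logSumIneq s a b ha hb hab hA
  have h2 : (0:ℝ) < Real.log 2 := Real.log_pos one_lt_two
  simp only [Real.logb]
  rw [show (∑ i ∈ s, a i) * (Real.log ((∑ i ∈ s, a i) / (∑ i ∈ s, b i)) / Real.log 2)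
      = ((∑ i ∈ s, a i) * Real.log ((∑ i ∈ s, a i) / (∑ i ∈ s, b i))) / Real.log 2 by ring,
    show (∑ i ∈ s, a i * (Real.log (a i / b i) / Real.log 2))
      = (∑ i ∈ s, a i * Real.log (a i / b i)) / Real.log 2 by
        rw [Finset.sum_div]; apply Finset.sum_congr rfl; intro i _; ring]
  gcongr

/-- Entropy upper bound on a finite set. -/
lemma entIneq {ι : Type*} (s : Finset ι) (a : ι → ℝ) (ha : ∀ i ∈ s, 0 ≤ a i) :
    -∑ i ∈ s, a i * Real.logb 2 (a i) ≤
      (∑ i ∈ s, a i) * Real.logb 2 (s.card) -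
        (∑ i ∈ s, a i) * Real.logb 2 (∑ i ∈ s, a i) := by
  rcases eq_or_lt_of_le (Finset.sum_nonneg ha) with hA | hA
  · have hz : ∀ i ∈ s, a i = 0 := by
      intro i hi
      exact (Finset.sum_eq_zero_iff_of_nonneg ha).mp hA.symm i hi
    have h1 : ∑ i ∈ s, a i * Real.logb 2 (a i) = 0 :=
      Finset.sum_eq_zero (fun i hi => by rw [hz i hi]; simp)
    rw [h1, ← hA]
    simp
  · have hne : s.Nonempty := Finset.nonempty_of_sum_ne_zero hA.ne'
    have hcard : (0:ℝ) < s.card := by exact_mod_cast Finset.card_pos.mpr hne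
    have h := logbSumIneq s a (fun _ => (1:ℝ)) ha (fun _ _ => zero_le_one)
      (fun _ _ _ => zero_lt_one) hA
    simp only [Finset.sum_const, nsmul_eq_mul, mul_one, div_one] at h
    have hlog : Real.logb 2 ((∑ i ∈ s, a i) / s.card) =
        Real.logb 2 (∑ i ∈ s, a i) - Real.logb 2 s.card :=
      Real.logb_div hA.ne' hcard.ne'
    rw [hlog] at h
    nlinarith [h]

lemma bddAboveAux {γ : Type*} [Fintype γ] (g : γ → ℝ) (pred : γ → Prop) :
    BddAbove {v : ℝ | ∃ i, pred i ∧ v = g i} := by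
  apply Set.Finite.bddAbove
  apply Set.Finite.subset (Set.finite_range g)
  rintro v ⟨i, -, rfl⟩
  exact ⟨i, rfl⟩

lemma mainBound {k : ℕ} {𝒳 : Fin k → Type} [∀ i, Fintype (𝒳 i)] [∀ i, DecidableEq (𝒳 i)]
    (c : ℝ) (hc0 : 0 ≤ c) (θ : Fin k → ℝ) (hθ0 : ∀ j, 0 ≤ θ j)
    (P Q : (∀ j, 𝒳 j) → ℝ) (hP0 : ∀ x, 0 ≤ P x) (hQ0 : ∀ x, 0 ≤ Q x) (hQ1 : ∑ x, Q x = 1)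
    (hQP : ∀ x, P x = 0 → Q x = 0)
    (m : Fin k → ℕ) (π : ∀ j, 𝒳 j → Fin (m j)) (M : ℝ)
    (hM : ∀ i : ∀ j, Fin (m j),
      (0 < ∑ x : ∀ j, 𝒳 j, if ∀ j, π j (x j) = i j then P x else 0) →
      (∑ j, θ j * Real.logb 2 ((Finset.univ.filter (fun a : 𝒳 j => π j a = i j)).card)) +
        c * Real.logb 2 (∑ x : ∀ j, 𝒳 j, if ∀ j, π j (x j) = i j then P x else 0) ≤ M) :
    (∑ j, θ j * shEnt (marg Q j)) - c * klD Q P ≤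
      (∑ j, θ j * Real.logb 2 (m j)) + c * (∑ j, Real.logb 2 (m j)) + M := by
  classical
  set tup : (∀ j, 𝒳 j) → (∀ j, Fin (m j)) := fun x j => π j (x j) with htup
  set BQ : (∀ j, Fin (m j)) → ℝ := fun i => ∑ x, if tup x = i then Q x else 0 with hBQdef
  set BP : (∀ j, Fin (m j)) → ℝ := fun i => ∑ x, if tup x = i then P x else 0 with hBPdef
  set L : ∀ j : Fin k, Fin (m j) → ℝ :=
    fun j b => Real.logb 2 ((Finset.univ.filter (fun a : 𝒳 j => π j a = b)).card) with hLdef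
  set mq : ∀ j : Fin k, Fin (m j) → ℝ :=
    fun j b => ∑ x, if π j (x j) = b then Q x else 0 with hmqdef
  have hPBeq : ∀ i : ∀ j, Fin (m j),
      (∑ x : ∀ j, 𝒳 j, if ∀ j, π j (x j) = i j then P x else 0) = BP i := by
    intro i
    simp only [hBPdef]
    exact Finset.sum_congr rfl (fun x _ => if_congr funext_iff.symm rfl rfl)
  have hBQ0 : ∀ i, 0 ≤ BQ i := by
    intro i
    simp only [hBQdef]
    exact Finset.sum_nonneg fun x _ => by split_ifs; exacts [hQ0 x, le_rfl]
  have hBP0 : ∀ i, 0 ≤ BP i := by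
    intro i
    simp only [hBPdef]
    exact Finset.sum_nonneg fun x _ => by split_ifs; exacts [hP0 x, le_rfl]
  have hBQ1 : ∑ i, BQ i = 1 := by
    simp only [hBQdef]
    rw [Finset.sum_comm]
    simp only [Finset.sum_ite_eq, Finset.mem_univ, if_true]
    exact hQ1
  have hBQz : ∀ i, BQ i = 0 → ∀ x, tup x = i → Q x = 0 := by
    intro i hBQi x hx
    simp only [hBQdef] at hBQi
    have h := (Finset.sum_eq_zero_iff_of_nonneg
      (fun x _ => by split_ifs; exacts [hQ0 x, le_rfl])).mp hBQi x (Finset.mem_univ x)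
    rwa [if_pos hx] at h
  have hBQP : ∀ i, 0 < BQ i → 0 < BP i := by
    intro i hi
    rcases (hBP0 i).lt_or_eq with h | h
    · exact h
    · exfalso
      have hBPi : BP i = 0 := h.symm
      simp only [hBPdef] at hBPi
      have hPz : ∀ x, tup x = i → P x = 0 := by
        intro x hx
        have h2 := (Finset.sum_eq_zero_iff_of_nonneg
          (fun x _ => by split_ifs; exacts [hP0 x, le_rfl])).mp hBPi x (Finset.mem_univ x)
        rwa [if_pos hx] at h2
      have : BQ i = 0 := by
        simp only [hBQdef]
        apply Finset.sum_eq_zero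
        intro x _
        by_cases hx : tup x = i
        · rw [if_pos hx, hQP x (hPz x hx)]
        · rw [if_neg hx]
      linarith
  -- KL lower bound
  have hKL : ∑ i, BQ i * Real.logb 2 (BQ i / BP i) ≤ klD Q P := by
    rw [klD, ← Finset.sum_fiberwise univ tup (fun x => Q x * Real.logb 2 (Q x / P x))]
    apply Finset.sum_le_sum
    intro i _
    have hQs : ∑ x ∈ univ.filter (fun x => tup x = i), Q x = BQ i := by
      rw [Finset.sum_filter]
    have hPs : ∑ x ∈ univ.filter (fun x => tup x = i), P x = BP i := by
      rw [Finset.sum_filter]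
    rcases (hBQ0 i).lt_or_eq with hpos | hzero
    · have h := logbSumIneq (univ.filter (fun x => tup x = i)) Q P
        (fun x _ => hQ0 x) (fun x _ => hP0 x)
        (fun x _ hx => lt_of_le_of_ne (hP0 x)
          (fun h => by have := hQP x h.symm; linarith))
        (by rw [hQs]; exact hpos)
      rw [hQs, hPs] at h
      exact h
    · have hz : ∀ x ∈ univ.filter (fun x => tup x = i),
          Q x * Real.logb 2 (Q x / P x) = 0 := by
        intro x hx
        rw [hBQz i hzero.symm x (Finset.mem_filter.mp hx).2]
        simp
      rw [← hzero, zero_mul, Finset.sum_eq_zero hz]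
  have hTne : Nonempty (∀ j, Fin (m j)) := by
    by_contra h
    rw [not_nonempty_iff] at h
    rw [Finset.univ_eq_empty, Finset.sum_empty] at hBQ1
    exact one_ne_zero hBQ1.symm
  have hm : ∀ j, 0 < m j := fun j => (hTne.some j).pos
  have hlogT : Real.logb 2 ((Fintype.card (∀ j, Fin (m j)) : ℝ)) = ∑ j, Real.logb 2 (m j) := by
    rw [Fintype.card_pi]
    simp only [Fintype.card_fin]
    push_cast
    exact Real.logb_prod _ _ (fun j _ => by exact_mod_cast (hm j).ne')
  have hHBQ : -∑ i, BQ i * Real.logb 2 (BQ i) ≤ ∑ j, Real.logb 2 (m j) := by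
    have h := entIneq univ BQ (fun i _ => hBQ0 i)
    rw [hBQ1, Finset.card_univ, one_mul, one_mul, Real.logb_one, sub_zero, hlogT] at h
    exact h
  -- marginals
  have hmarg0 : ∀ (j : Fin k) (a : 𝒳 j), 0 ≤ marg Q j a := by
    intro j a
    exact Finset.sum_nonneg fun x _ => by split_ifs; exacts [hQ0 x, le_rfl]
  have hmq0 : ∀ (j : Fin k) (b : Fin (m j)), 0 ≤ mq j b := by
    intro j b
    simp only [hmqdef]
    exact Finset.sum_nonneg fun x _ => by split_ifs; exacts [hQ0 x, le_rfl]
  have hmq1 : ∀ j, ∑ b, mq j b = 1 := by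
    intro j
    simp only [hmqdef]
    rw [Finset.sum_comm]
    simp only [Finset.sum_ite_eq, Finset.mem_univ, if_true]
    exact hQ1
  have hmqA : ∀ (j : Fin k) (b : Fin (m j)),
      ∑ a ∈ univ.filter (fun a => π j a = b), marg Q j a = mq j b := by
    intro j b
    rw [Finset.sum_filter]
    simp only [marg, hmqdef]
    rw [show (∑ a : 𝒳 j, if π j a = b then (∑ x : ∀ i, 𝒳 i, if x j = a then Q x else 0) else 0)
        = ∑ a : 𝒳 j, ∑ x : ∀ i, 𝒳 i, (if π j a = b then (if x j = a then Q x else 0) else 0) from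
      Finset.sum_congr rfl (fun a _ => by split_ifs <;> simp)]
    rw [Finset.sum_comm]
    apply Finset.sum_congr rfl
    intro x _
    rw [show (∑ a : 𝒳 j, if π j a = b then (if x j = a then Q x else 0) else 0)
        = ∑ a : 𝒳 j, if x j = a then (if π j a = b then Q x else 0) else 0 from
      Finset.sum_congr rfl (fun a _ => by split_ifs <;> rfl)]
    rw [Finset.sum_ite_eq]
    simp
  have hmqB : ∀ (j : Fin k) (b : Fin (m j)),
      (∑ i : ∀ j, Fin (m j), if i j = b then BQ i else 0) = mq j b := by
    intro j b
    simp only [hBQdef, hmqdef]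
    rw [show (∑ i : ∀ j, Fin (m j), if i j = b
          then (∑ x : ∀ j, 𝒳 j, if tup x = i then Q x else 0) else 0)
        = ∑ i : ∀ j, Fin (m j), ∑ x : ∀ j, 𝒳 j,
            (if i j = b then (if tup x = i then Q x else 0) else 0) from
      Finset.sum_congr rfl (fun i _ => by split_ifs <;> simp)]
    rw [Finset.sum_comm]
    apply Finset.sum_congr rfl
    intro x _
    rw [show (∑ i : ∀ j, Fin (m j), if i j = b then (if tup x = i then Q x else 0) else 0)
        = ∑ i : ∀ j, Fin (m j), if tup x = i then (if i j = b then Q x else 0) else 0 from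
      Finset.sum_congr rfl (fun i _ => by split_ifs <;> rfl)]
    rw [Finset.sum_ite_eq]
    simp [htup]
  -- per-coordinate entropy bound
  have hHj : ∀ j, shEnt (marg Q j) ≤ (∑ b, mq j b * L j b) + Real.logb 2 (m j) := by
    intro j
    rw [shEnt]
    have h1 : ∀ b : Fin (m j),
        -∑ a ∈ univ.filter (fun a => π j a = b), marg Q j a * Real.logb 2 (marg Q j a)
        ≤ mq j b * L j b - mq j b * Real.logb 2 (mq j b) := by
      intro b
      have h := entIneq (univ.filter (fun a => π j a = b)) (marg Q j) (fun a _ => hmarg0 j a)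
      rw [hmqA j b] at h
      simpa only [hLdef] using h
    have h2 : -∑ b, mq j b * Real.logb 2 (mq j b) ≤ Real.logb 2 (m j) := by
      have h := entIneq univ (mq j) (fun b _ => hmq0 j b)
      rw [hmq1 j, Finset.card_univ, Fintype.card_fin, one_mul, one_mul,
        Real.logb_one, sub_zero] at h
      exact h
    have hsum2 : (∑ b, (mq j b * L j b - mq j b * Real.logb 2 (mq j b)))
        = (∑ b, mq j b * L j b) - ∑ b, mq j b * Real.logb 2 (mq j b) :=
      Finset.sum_sub_distrib _ _
    calc -∑ a, marg Q j a * Real.logb 2 (marg Q j a)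
        = ∑ b, -(∑ a ∈ univ.filter (fun a => π j a = b),
            marg Q j a * Real.logb 2 (marg Q j a)) := by
          rw [← Finset.sum_fiberwise univ (π j)
              (fun a => marg Q j a * Real.logb 2 (marg Q j a)),
            Finset.sum_neg_distrib]
      _ ≤ ∑ b, (mq j b * L j b - mq j b * Real.logb 2 (mq j b)) :=
          Finset.sum_le_sum (fun b _ => h1 b)
      _ = (∑ b, mq j b * L j b) - ∑ b, mq j b * Real.logb 2 (mq j b) := hsum2
      _ ≤ (∑ b, mq j b * L j b) + Real.logb 2 (m j) := by linarith [h2]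
  -- rearrangement
  have hrearr : ∑ j, θ j * ∑ b, mq j b * L j b = ∑ i, BQ i * ∑ j, θ j * L j (i j) := by
    have key : ∀ j, ∑ b, mq j b * L j b = ∑ i, BQ i * L j (i j) := by
      intro j
      calc ∑ b, mq j b * L j b
          = ∑ b, (∑ i : ∀ j, Fin (m j), if i j = b then BQ i else 0) * L j b := by
            exact Finset.sum_congr rfl (fun b _ => by rw [hmqB j b])
        _ = ∑ b, ∑ i : ∀ j, Fin (m j), (if i j = b then BQ i * L j b else 0) := by
            apply Finset.sum_congr rfl; intro b _
            rw [Finset.sum_mul]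
            exact Finset.sum_congr rfl (fun i _ => by split_ifs <;> simp)
        _ = ∑ i : ∀ j, Fin (m j), ∑ b, (if i j = b then BQ i * L j b else 0) :=
            Finset.sum_comm
        _ = ∑ i, BQ i * L j (i j) := by
            apply Finset.sum_congr rfl; intro i _
            rw [Finset.sum_ite_eq]
            simp
    calc ∑ j, θ j * ∑ b, mq j b * L j b
        = ∑ j, ∑ i, θ j * (BQ i * L j (i j)) := by
          apply Finset.sum_congr rfl; intro j _
          rw [key j, Finset.mul_sum]
      _ = ∑ i, ∑ j, θ j * (BQ i * L j (i j)) := Finset.sum_comm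
      _ = ∑ i, BQ i * ∑ j, θ j * L j (i j) := by
          apply Finset.sum_congr rfl; intro i _
          rw [Finset.mul_sum]
          exact Finset.sum_congr rfl (fun j _ => by ring)
  -- split of the KL sum
  have hsplit : ∑ i, BQ i * Real.logb 2 (BQ i / BP i)
      = ∑ i, BQ i * Real.logb 2 (BQ i) - ∑ i, BQ i * Real.logb 2 (BP i) := by
    rw [← Finset.sum_sub_distrib]
    apply Finset.sum_congr rfl
    intro i _
    rcases (hBQ0 i).lt_or_eq with hpos | hzero
    · rw [Real.logb_div hpos.ne' (hBQP i hpos).ne']; ring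
    · rw [← hzero]; ring
  -- F1
  have F1 : ∑ j, θ j * shEnt (marg Q j) ≤
      (∑ i, BQ i * ∑ j, θ j * L j (i j)) + ∑ j, θ j * Real.logb 2 (m j) := by
    calc ∑ j, θ j * shEnt (marg Q j)
        ≤ ∑ j, θ j * ((∑ b, mq j b * L j b) + Real.logb 2 (m j)) :=
          Finset.sum_le_sum (fun j _ => mul_le_mul_of_nonneg_left (hHj j) (hθ0 j))
      _ = (∑ j, θ j * ∑ b, mq j b * L j b) + ∑ j, θ j * Real.logb 2 (m j) := by
          rw [← Finset.sum_add_distrib]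
          exact Finset.sum_congr rfl (fun j _ => by ring)
      _ = _ := by rw [hrearr]
  -- F5
  have F5 : (∑ i, BQ i * ∑ j, θ j * L j (i j)) +
      c * ∑ i, BQ i * Real.logb 2 (BP i) ≤ M := by
    have hM' : ∀ i, 0 < BP i → (∑ j, θ j * L j (i j)) + c * Real.logb 2 (BP i) ≤ M := by
      intro i hi
      have h := hM i (by rw [hPBeq i]; exact hi)
      rw [hPBeq i] at h
      simpa only [hLdef] using h
    calc (∑ i, BQ i * ∑ j, θ j * L j (i j)) + c * ∑ i, BQ i * Real.logb 2 (BP i)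
        = ∑ i, BQ i * ((∑ j, θ j * L j (i j)) + c * Real.logb 2 (BP i)) := by
          rw [Finset.mul_sum, ← Finset.sum_add_distrib]
          exact Finset.sum_congr rfl (fun i _ => by ring)
      _ ≤ ∑ i, BQ i * M := by
          apply Finset.sum_le_sum
          intro i _
          rcases (hBQ0 i).lt_or_eq with hpos | hzero
          · exact mul_le_mul_of_nonneg_left (hM' i (hBQP i hpos)) (hBQ0 i)
          · rw [← hzero]; simp
      _ = M := by rw [← Finset.sum_mul, hBQ1, one_mul]
  -- final assembly
  have P1 : 0 ≤ c * klD Q P - c * (∑ i, BQ i * Real.logb 2 (BQ i))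
      + c * (∑ i, BQ i * Real.logb 2 (BP i)) := by
    have h0 : 0 ≤ klD Q P - (∑ i, BQ i * Real.logb 2 (BQ i))
        + (∑ i, BQ i * Real.logb 2 (BP i)) := by linarith [hKL, hsplit]
    nlinarith [mul_nonneg hc0 h0]
  have P2 : 0 ≤ c * (∑ j, Real.logb 2 (m j)) + c * (∑ i, BQ i * Real.logb 2 (BQ i)) := by
    have h0 : 0 ≤ (∑ j, Real.logb 2 (m j)) + (∑ i, BQ i * Real.logb 2 (BQ i)) := by
      linarith [hHBQ]
    nlinarith [mul_nonneg hc0 h0]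
  linarith [F1, F5, P1, P2]

/-- block-decomposition upper bound on `H_{α,θ}(P)`.  For each `j` the
partition of `𝒳 j` into `m j` (possibly empty) blocks is encoded by a labelling
function `π j : 𝒳 j → Fin (m j)`, the block `I_{j,i}` being the fibre `π j ⁻¹ {i}`. -/
theorem stmt5 {k : ℕ} (hk : 1 ≤ k) (𝒳 : Fin k → Type)
    [∀ i, Fintype (𝒳 i)] [∀ i, DecidableEq (𝒳 i)]
    (α : ℝ) (hα : α ∈ Set.Ioo (0 : ℝ) 1) (θ : Fin k → ℝ) (hθ : probVec θ)
    (P : (∀ i, 𝒳 i) → ℝ) (hP0 : ∀ x, 0 ≤ P x) (hPne : P ≠ 0)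
    (m : Fin k → ℕ) (π : ∀ j, 𝒳 j → Fin (m j)) :
    Hat α θ P ≤ (∑ j, θ j * Real.logb 2 (m j)) +
      α / (1 - α) * (∑ j, Real.logb 2 (m j)) +
      sSup { v : ℝ | ∃ i : ∀ j, Fin (m j),
        (0 < ∑ x : ∀ j, 𝒳 j, if ∀ j, π j (x j) = i j then P x else 0) ∧
        v = (∑ j, θ j * Real.logb 2 ((Finset.univ.filter (fun a : 𝒳 j => π j a = i j)).card)) +
          α / (1 - α) *
            Real.logb 2 (∑ x : ∀ j, 𝒳 j, if ∀ j, π j (x j) = i j then P x else 0) } := by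
  classical
  obtain ⟨hα0, hα1⟩ := hα
  obtain ⟨hθ0, hθ1⟩ := hθ
  have hc0 : (0:ℝ) ≤ α / (1 - α) := div_nonneg hα0.le (by linarith)
  rw [Hat]
  apply csSup_le
  · -- nonempty
    have hS : 0 < ∑ x, P x := by
      rcases Function.ne_iff.mp hPne with ⟨x, hx⟩
      have hx' : 0 < P x := lt_of_le_of_ne (hP0 x) (fun h => hx (by simpa using h.symm))
      exact Finset.sum_pos' (fun y _ => hP0 y) ⟨x, Finset.mem_univ x, hx'⟩
    exact ⟨_, fun x => P x / ∑ y, P y,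
      ⟨fun x => div_nonneg (hP0 x) hS.le, by rw [← Finset.sum_div, div_self hS.ne']⟩,
      fun x hx => by show P x / _ = 0; rw [hx, zero_div], rfl⟩
  · rintro v ⟨Q, ⟨hQ0, hQ1⟩, hQP, rfl⟩
    apply mainBound (α / (1 - α)) hc0 θ hθ0 P Q hP0 hQ0 hQ1 hQP m π
    intro i hi
    apply le_csSup (bddAboveAux _ _)
    exact ⟨i, hi, rfl⟩
end
end

section
/- Let k ≥ 1, α ∈ [0,1), θ ∈ Δ([k]). Let P⁽¹⁾ be a nonzero measure on 𝒳₁⁽¹⁾ × … × 𝒳ₖ⁽¹⁾ and P⁽²⁾ a nonzero measure on 𝒳₁⁽²⁾ × … × 𝒳ₖ⁽²⁾, and let their product P⁽¹⁾ ⊗ P⁽²⁾ be the measure on (𝒳₁⁽¹⁾×𝒳₁⁽²⁾) × … × (𝒳ₖ⁽¹⁾×𝒳ₖ⁽²⁾) given by (P⁽¹⁾ ⊗ P⁽²⁾)((x₁,y₁),…,(x_k,y_k)) = P⁽¹⁾(x₁,…,x_k) · P⁽²⁾(y₁,…,y_k). Then H_{α,θ}(P⁽¹⁾ ⊗ P⁽²⁾)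 = H_{α,θ}(P⁽¹⁾) + H_{α,θ}(P⁽²⁾). -/
open Finset

noncomputable section

/-- Tensor product of measures, with the index sets paired factorwise. -/
def tensorM {k : ℕ} {𝒳 𝒴 : Fin k → Type*}
    (P1 : (∀ j, 𝒳 j) → ℝ) (P2 : (∀ j, 𝒴 j) → ℝ) : (∀ j, 𝒳 j × 𝒴 j) → ℝ :=
  fun x => P1 (fun j => (x j).1) * P2 (fun j => (x j).2)

set_option linter.unusedSectionVars false

/-! ### Auxiliary lemmas -/

lemma gibbs_term {q r : ℝ} (hq : 0 ≤ q) (hr : 0 ≤ r) (hsupp : r = 0 → q = 0) :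
    (q - r) / Real.log 2 ≤ q * Real.logb 2 (q / r) := by
  have hl2 : (0:ℝ) < Real.log 2 := Real.log_pos one_lt_two
  rcases eq_or_lt_of_le hq with h | hq'
  · rw [← h, zero_mul, zero_sub]
    exact div_nonpos_of_nonpos_of_nonneg (by linarith) hl2.le
  · have hr' : 0 < r := lt_of_le_of_ne hr (fun h => by
      have := hsupp h.symm; linarith)
    have hlog : Real.log r - Real.log q ≤ r / q - 1 := by
      have := Real.log_le_sub_one_of_pos (x := r / q) (by positivity)
      rwa [Real.log_div hr'.ne' hq'.ne'] at this
    have h1 : q - r ≤ q * (Real.log q - Real.log r) := by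
      have h2 := mul_le_mul_of_nonneg_left hlog hq'.le
      have h3 : q * (r / q - 1) = r - q := by field_simp
      nlinarith
    have h4 : q * Real.logb 2 (q / r) = q * (Real.log q - Real.log r) / Real.log 2 := by
      rw [Real.logb, Real.log_div hq'.ne' hr'.ne']; ring
    rw [h4]
    exact div_le_div_of_nonneg_right h1 hl2.le |>.trans_eq rfl

/-- Gibbs' inequality for a probability vector against a sub-probability measure. -/
lemma gibbs_s6 {Z : Type*} [Fintype Z] {Q R : Z → ℝ} (hQ0 : ∀ z, 0 ≤ Q z) (hR0 : ∀ z, 0 ≤ R z)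
    (hQ1 : ∑ z, Q z = 1) (hR1 : ∑ z, R z ≤ 1) (hsupp : ∀ z, R z = 0 → Q z = 0) :
    0 ≤ ∑ z, Q z * Real.logb 2 (Q z / R z) := by
  have hl2 : (0:ℝ) < Real.log 2 := Real.log_pos one_lt_two
  have key : ∑ z, (Q z - R z) / Real.log 2 ≤ ∑ z, Q z * Real.logb 2 (Q z / R z) :=
    Finset.sum_le_sum fun z _ => gibbs_term (hQ0 z) (hR0 z) (hsupp z)
  have h2 : ∑ z, (Q z - R z) / Real.log 2 = (1 - ∑ z, R z) / Real.log 2 := by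
    rw [← Finset.sum_div, Finset.sum_sub_distrib, hQ1]
  have h3 : 0 ≤ (1 - ∑ z, R z) / Real.log 2 := div_nonneg (by linarith) hl2.le
  linarith

lemma entTerm_le {q : ℝ} (hq : 0 ≤ q) : -(q * Real.logb 2 q) ≤ 2 := by
  have hl2 : (0:ℝ) < Real.log 2 := Real.log_pos one_lt_two
  have hl2' : (1:ℝ)/2 ≤ Real.log 2 := by
    have := Real.log_two_gt_d9; norm_num at this ⊢; linarith
  rcases eq_or_lt_of_le hq with h | hq'
  · rw [← h]; norm_num
  · have h1 : Real.log (1/q) ≤ 1/q - 1 := Real.log_le_sub_one_of_pos (by positivity)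
    rw [Real.log_div one_ne_zero hq'.ne', Real.log_one, zero_sub] at h1
    have h2 : -(q * Real.log q) ≤ 1 := by
      have h3 := mul_le_mul_of_nonneg_left h1 hq'.le
      have h4 : q * (1/q - 1) = 1 - q := by field_simp
      nlinarith
    have h5 : -(q * Real.logb 2 q) = -(q * Real.log q) / Real.log 2 := by
      rw [Real.logb]; ring
    rw [h5, div_le_iff₀ hl2]
    nlinarith

lemma marg_nonneg_s6 {k : ℕ} {𝒳 : Fin k → Type*} [∀ j, Fintype (𝒳 j)] [∀ j, DecidableEq (𝒳 j)]
    {Q : (∀ j, 𝒳 j) → ℝ} (hQ0 : ∀ x, 0 ≤ Q x) (j : Fin k) (a : 𝒳 j) : 0 ≤ marg Q j a :=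
  Finset.sum_nonneg fun x _ => by split <;> simp [hQ0 x]

lemma marg_sum {k : ℕ} {𝒳 : Fin k → Type*} [∀ j, Fintype (𝒳 j)] [∀ j, DecidableEq (𝒳 j)]
    (Q : (∀ j, 𝒳 j) → ℝ) (j : Fin k) : ∑ a, marg Q j a = ∑ x, Q x := by
  simp only [marg]; rw [Finset.sum_comm]
  exact Finset.sum_congr rfl fun x _ => by simp

lemma probVec_marg {k : ℕ} {𝒳 : Fin k → Type*} [∀ j, Fintype (𝒳 j)] [∀ j, DecidableEq (𝒳 j)]
    {Q : (∀ j, 𝒳 j) → ℝ} (hQ : probVec Q) (j : Fin k) : probVec (marg Q j) :=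
  ⟨marg_nonneg_s6 hQ.1 j, by rw [marg_sum, hQ.2]⟩

lemma shEnt_le_card {X : Type*} [Fintype X] {Q : X → ℝ} (hQ0 : ∀ x, 0 ≤ Q x) :
    shEnt Q ≤ 2 * Fintype.card X := by
  rw [shEnt, ← Finset.sum_neg_distrib]
  calc ∑ x, -(Q x * Real.logb 2 (Q x)) ≤ ∑ _x : X, (2:ℝ) :=
        Finset.sum_le_sum fun x _ => entTerm_le (hQ0 x)
    _ = 2 * Fintype.card X := by simp [mul_comm]

lemma klD_lb {Z : Type*} [Fintype Z] {Q P : Z → ℝ} (hQ : probVec Q) (hP0 : ∀ z, 0 ≤ P z)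
    (hs : 0 < ∑ z, P z) (hsupp : ∀ z, P z = 0 → Q z = 0) :
    -(Real.logb 2 (∑ z, P z)) ≤ klD Q P := by
  set s := ∑ z, P z with hsdef
  have h1 : 0 ≤ ∑ z, Q z * Real.logb 2 (Q z / (P z / s)) := by
    apply gibbs_s6 hQ.1 (fun z => div_nonneg (hP0 z) hs.le) hQ.2 (le_of_eq ?_) (fun z hz => ?_)
    · rw [← Finset.sum_div, div_self hs.ne']
    · exact hsupp z (by field_simp at hz; simpa using hz)
  have h2 : ∀ z, Q z * Real.logb 2 (Q z / (P z / s)) =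
      Q z * Real.logb 2 (Q z / P z) + Q z * Real.logb 2 s := by
    intro z
    rcases eq_or_lt_of_le (hQ.1 z) with h | hq
    · rw [← h]; ring
    · have hp : 0 < P z := lt_of_le_of_ne (hP0 z) fun h => by
        have := hsupp z h.symm; linarith
      have : Q z / (P z / s) = (Q z / P z) * s := by field_simp
      rw [this, Real.logb_mul (div_ne_zero hq.ne' hp.ne') hs.ne', mul_add]
  rw [Finset.sum_congr rfl (fun z _ => h2 z), Finset.sum_add_distrib,
    ← Finset.sum_mul, hQ.2, one_mul] at h1
  rw [klD]; linarith

lemma logb_split {a qa qb p1 p2 : ℝ} (ha : a ≠ 0) (hqa : qa ≠ 0) (hqb : qb ≠ 0)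
    (hp1 : p1 ≠ 0) (hp2 : p2 ≠ 0) :
    Real.logb 2 (a / (p1 * p2)) = Real.logb 2 (a / (qa * qb))
      + Real.logb 2 (qa / p1) + Real.logb 2 (qb / p2) := by
  rw [Real.logb_div ha (mul_ne_zero hp1 hp2), Real.logb_div ha (mul_ne_zero hqa hqb),
    Real.logb_div hqa hp1, Real.logb_div hqb hp2, Real.logb_mul hp1 hp2, Real.logb_mul hqa hqb]
  ring

lemma hat_nonempty {k : ℕ} {𝒳 : Fin k → Type*} [∀ j, Fintype (𝒳 j)] [∀ j, DecidableEq (𝒳 j)]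
    (α : ℝ) (θ : Fin k → ℝ) {P : (∀ j, 𝒳 j) → ℝ} (hPne : P ≠ 0) :
    Set.Nonempty { v : ℝ | ∃ Q : (∀ j, 𝒳 j) → ℝ, probVec Q ∧ (∀ x, P x = 0 → Q x = 0) ∧
      v = (∑ j, θ j * shEnt (marg Q j)) - α / (1 - α) * klD Q P } := by
  obtain ⟨x0, hx0⟩ := Function.ne_iff.mp hPne
  simp only [Pi.zero_apply] at hx0
  refine ⟨_, fun x => if x = x0 then 1 else 0, ⟨fun x => by by_cases h : x = x0 <;> simp [h], by simp⟩,
    fun x hx => ?_, rfl⟩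
  by_cases h : x = x0
  · exact absurd (h ▸ hx) hx0
  · simp [h]

lemma hat_bdd {k : ℕ} {𝒳 : Fin k → Type*} [∀ j, Fintype (𝒳 j)] [∀ j, DecidableEq (𝒳 j)]
    {α : ℝ} (hc : 0 ≤ α / (1 - α)) {θ : Fin k → ℝ} (hθ0 : ∀ j, 0 ≤ θ j)
    {P : (∀ j, 𝒳 j) → ℝ} (hP0 : ∀ x, 0 ≤ P x) (hs : 0 < ∑ x, P x) :
    BddAbove { v : ℝ | ∃ Q : (∀ j, 𝒳 j) → ℝ, probVec Q ∧ (∀ x, P x = 0 → Q x = 0) ∧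
      v = (∑ j, θ j * shEnt (marg Q j)) - α / (1 - α) * klD Q P } := by
  refine ⟨(∑ j, θ j * (2 * (Fintype.card (𝒳 j) : ℝ)))
    + α / (1 - α) * Real.logb 2 (∑ x, P x), ?_⟩
  rintro v ⟨Q, hQ, hQs, rfl⟩
  have h1 : ∑ j, θ j * shEnt (marg Q j) ≤ ∑ j, θ j * (2 * (Fintype.card (𝒳 j) : ℝ)) :=
    Finset.sum_le_sum fun j _ =>
      mul_le_mul_of_nonneg_left (shEnt_le_card (marg_nonneg_s6 hQ.1 j)) (hθ0 j)
  have h2 := klD_lb hQ hP0 hs hQs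
  have h3 := mul_le_mul_of_nonneg_left h2 hc
  rw [mul_neg] at h3
  linarith

section Pairs

variable {k : ℕ} {𝒳 𝒴 : Fin k → Type*} [∀ j, Fintype (𝒳 j)] [∀ j, DecidableEq (𝒳 j)]
  [∀ j, Fintype (𝒴 j)] [∀ j, DecidableEq (𝒴 j)]

lemma sumPair (f : (∀ j, 𝒳 j × 𝒴 j) → ℝ) :
    ∑ z, f z = ∑ x : ∀ j, 𝒳 j, ∑ y : ∀ j, 𝒴 j, f (fun j => (x j, y j)) := by
  trans (∑ p : (∀ j, 𝒳 j) × (∀ j, 𝒴 j), f fun j => (p.1 j, p.2 j))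
  · exact (Equiv.sum_comp
      ((⟨fun p => fun j => (p.1 j, p.2 j), fun z => (fun j => (z j).1, fun j => (z j).2),
        fun p => rfl, fun z => rfl⟩ : ((∀ j, 𝒳 j) × (∀ j, 𝒴 j)) ≃ (∀ j, 𝒳 j × 𝒴 j))) f).symm
  · exact Fintype.sum_prod_type (fun p : (∀ j, 𝒳 j) × (∀ j, 𝒴 j) => f fun j => (p.1 j, p.2 j))

lemma probVec_tensor {Q1 : (∀ j, 𝒳 j) → ℝ} {Q2 : (∀ j, 𝒴 j) → ℝ}
    (h1 : probVec Q1) (h2 : probVec Q2) : probVec (tensorM Q1 Q2) := by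
  constructor
  · intro z; exact mul_nonneg (h1.1 _) (h2.1 _)
  · rw [sumPair (tensorM Q1 Q2)]
    simp only [tensorM]
    rw [Finset.sum_congr rfl fun x (_ : x ∈ univ) => show
        (∑ y, Q1 x * Q2 y) = Q1 x by rw [← Finset.mul_sum, h2.2, mul_one]]
    exact h1.2

lemma marg_tensor (Q1 : (∀ j, 𝒳 j) → ℝ) (Q2 : (∀ j, 𝒴 j) → ℝ) (j : Fin k) (c : 𝒳 j × 𝒴 j) :
    marg (tensorM Q1 Q2) j c = marg Q1 j c.1 * marg Q2 j c.2 := by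
  rw [show marg (tensorM Q1 Q2) j c = ∑ z : ∀ i, 𝒳 i × 𝒴 i,
      if z j = c then tensorM Q1 Q2 z else 0 from rfl, sumPair]
  rw [show marg Q1 j c.1 * marg Q2 j c.2
      = ∑ x : ∀ i, 𝒳 i, ∑ y : ∀ i, 𝒴 i,
        (if x j = c.1 then Q1 x else 0) * (if y j = c.2 then Q2 y else 0) by
    rw [marg, marg, Finset.sum_mul]
    exact Finset.sum_congr rfl fun x _ => by rw [Finset.mul_sum]]
  refine Finset.sum_congr rfl fun x _ => Finset.sum_congr rfl fun y _ => ?_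
  simp only [tensorM, Prod.ext_iff]
  by_cases hx : x j = c.1 <;> by_cases hy : y j = c.2 <;> simp [hx, hy]

lemma klD_tensor {Q1 P1 : (∀ j, 𝒳 j) → ℝ} {Q2 P2 : (∀ j, 𝒴 j) → ℝ}
    (h1 : probVec Q1) (h2 : probVec Q2)
    (hs1 : ∀ x, P1 x = 0 → Q1 x = 0) (hs2 : ∀ y, P2 y = 0 → Q2 y = 0) :
    klD (tensorM Q1 Q2) (tensorM P1 P2) = klD Q1 P1 + klD Q2 P2 := by
  have key : ∀ x y, Q1 x * Q2 y * Real.logb 2 ((Q1 x * Q2 y) / (P1 x * P2 y))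
      = Q2 y * (Q1 x * Real.logb 2 (Q1 x / P1 x))
        + Q1 x * (Q2 y * Real.logb 2 (Q2 y / P2 y)) := by
    intro x y
    by_cases hx : Q1 x = 0
    · simp [hx]
    by_cases hy : Q2 y = 0
    · simp [hy]
    have hp1 : P1 x ≠ 0 := fun h => hx (hs1 x h)
    have hp2 : P2 y ≠ 0 := fun h => hy (hs2 y h)
    rw [← div_mul_div_comm, Real.logb_mul (div_ne_zero hx hp1) (div_ne_zero hy hp2)]
    ring
  rw [klD, sumPair]
  simp only [tensorM]
  rw [Finset.sum_congr rfl fun x (_ : x ∈ univ) => show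
      (∑ y, Q1 x * Q2 y * Real.logb 2 (Q1 x * Q2 y / (P1 x * P2 y)))
        = Q1 x * Real.logb 2 (Q1 x / P1 x) + Q1 x * klD Q2 P2 by
    rw [Finset.sum_congr rfl fun y _ => key x y, Finset.sum_add_distrib,
      ← Finset.sum_mul, h2.2, one_mul, ← Finset.mul_sum]; rfl]
  rw [Finset.sum_add_distrib, ← Finset.sum_mul, h1.2, one_mul]; rfl

lemma tensor_supp {P1 Q1 : (∀ j, 𝒳 j) → ℝ} {P2 Q2 : (∀ j, 𝒴 j) → ℝ}
    (hs1 : ∀ x, P1 x = 0 → Q1 x = 0) (hs2 : ∀ y, P2 y = 0 → Q2 y = 0) :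
    ∀ z, tensorM P1 P2 z = 0 → tensorM Q1 Q2 z = 0 := by
  intro z hz
  rcases mul_eq_zero.mp hz with h | h
  · exact mul_eq_zero.mpr (Or.inl (hs1 _ h))
  · exact mul_eq_zero.mpr (Or.inr (hs2 _ h))

/-- entropy of a product distribution on a pair of finite sets is additive -/
lemma shEnt_prod {A B : Type*} [Fintype A] [Fintype B] {μ : A → ℝ} {ν : B → ℝ}
    (hμ1 : ∑ a, μ a = 1) (hν1 : ∑ b, ν b = 1) :
    shEnt (fun c : A × B => μ c.1 * ν c.2) = shEnt μ + shEnt ν := by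
  have key : ∀ (a : A) (b : B), μ a * ν b * Real.logb 2 (μ a * ν b) =
      ν b * (μ a * Real.logb 2 (μ a)) + μ a * (ν b * Real.logb 2 (ν b)) := by
    intro a b
    by_cases ha : μ a = 0
    · simp [ha]
    by_cases hb : ν b = 0
    · simp [hb]
    rw [Real.logb_mul ha hb]; ring
  simp only [shEnt, Fintype.sum_prod_type]
  rw [Finset.sum_congr rfl fun a (_ : a ∈ univ) => show
      (∑ b, μ a * ν b * Real.logb 2 (μ a * ν b))
        = μ a * Real.logb 2 (μ a) + μ a * ∑ b, ν b * Real.logb 2 (ν b) by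
    rw [Finset.sum_congr rfl fun b _ => key a b, Finset.sum_add_distrib,
      ← Finset.sum_mul, hν1, one_mul, ← Finset.mul_sum]]
  rw [Finset.sum_add_distrib, ← Finset.sum_mul, hμ1, one_mul]
  ring

/-- entropy subadditivity for a joint distribution on a product of two finite sets -/
lemma shEnt_subadd {A B : Type*} [Fintype A] [Fintype B] {m : A × B → ℝ} (hm : probVec m) :
    shEnt m ≤ shEnt (fun a => ∑ b, m (a, b)) + shEnt (fun b => ∑ a, m (a, b)) := by
  set mA : A → ℝ := fun a => ∑ b, m (a, b) with hmA
  set mB : B → ℝ := fun b => ∑ a, m (a, b) with hmB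
  have hmA0 : ∀ a, 0 ≤ mA a := fun a => Finset.sum_nonneg fun b _ => hm.1 _
  have hmB0 : ∀ b, 0 ≤ mB b := fun b => Finset.sum_nonneg fun a _ => hm.1 _
  have hmA1 : ∑ a, mA a = 1 := by rw [hmA, ← Fintype.sum_prod_type, hm.2]
  have hmB1 : ∑ b, mB b = 1 := by
    rw [hmB]; rw [Finset.sum_comm, ← Fintype.sum_prod_type, hm.2]
  have hle : ∀ c : A × B, m c ≤ mA c.1 := by
    intro c
    have := Finset.single_le_sum (f := fun b => m (c.1, b)) (fun b _ => hm.1 _)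
      (Finset.mem_univ c.2)
    simpa using this
  have hleB : ∀ c : A × B, m c ≤ mB c.2 := by
    intro c
    have := Finset.single_le_sum (f := fun a => m (a, c.2)) (fun a _ => hm.1 _)
      (Finset.mem_univ c.1)
    simpa using this
  have hg : 0 ≤ ∑ c : A × B, m c * Real.logb 2 (m c / (mA c.1 * mB c.2)) := by
    apply gibbs_s6 hm.1 (fun c => mul_nonneg (hmA0 _) (hmB0 _)) hm.2 (le_of_eq ?_) ?_
    · rw [Fintype.sum_prod_type]
      rw [Finset.sum_congr rfl fun a (_ : a ∈ univ) => show
          (∑ b, mA a * mB b) = mA a by rw [← Finset.mul_sum, hmB1, mul_one]]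
      exact hmA1
    · intro c hc
      rcases mul_eq_zero.mp hc with h | h
      · exact le_antisymm (h ▸ hle c) (hm.1 c)
      · exact le_antisymm (h ▸ hleB c) (hm.1 c)
  have key : ∀ c : A × B, m c * Real.logb 2 (m c / (mA c.1 * mB c.2))
      = m c * Real.logb 2 (m c) - m c * Real.logb 2 (mA c.1)
        - m c * Real.logb 2 (mB c.2) := by
    intro c
    rcases eq_or_lt_of_le (hm.1 c) with h | h
    · rw [← h]; ring
    · have hA : mA c.1 ≠ 0 := ne_of_gt (lt_of_lt_of_le h (hle c))
      have hB : mB c.2 ≠ 0 := ne_of_gt (lt_of_lt_of_le h (hleB c))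
      rw [Real.logb_div h.ne' (mul_ne_zero hA hB), Real.logb_mul hA hB]
      ring
  rw [Finset.sum_congr rfl fun c _ => key c] at hg
  have e1 : ∑ c : A × B, m c * Real.logb 2 (mA c.1) = ∑ a, mA a * Real.logb 2 (mA a) := by
    rw [Fintype.sum_prod_type]
    refine Finset.sum_congr rfl fun a _ => ?_
    rw [show mA a * Real.logb 2 (mA a) = ∑ b, m (a, b) * Real.logb 2 (mA a) from
      by rw [← Finset.sum_mul]]
  have e2 : ∑ c : A × B, m c * Real.logb 2 (mB c.2) = ∑ b, mB b * Real.logb 2 (mB b) := by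
    rw [Fintype.sum_prod_type, Finset.sum_comm]
    refine Finset.sum_congr rfl fun b _ => ?_
    rw [show mB b * Real.logb 2 (mB b) = ∑ a, m (a, b) * Real.logb 2 (mB b) from
      by rw [← Finset.sum_mul]]
  simp only [Finset.sum_sub_distrib, e1, e2] at hg
  simp only [shEnt]
  linarith

/-- first marginal of a measure on a paired product -/
def margA (Q : (∀ j, 𝒳 j × 𝒴 j) → ℝ) : (∀ j, 𝒳 j) → ℝ :=
  fun x => ∑ y : ∀ j, 𝒴 j, Q (fun j => (x j, y j))

/-- second marginal of a measure on a paired product -/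
def margB (Q : (∀ j, 𝒳 j × 𝒴 j) → ℝ) : (∀ j, 𝒴 j) → ℝ :=
  fun y => ∑ x : ∀ j, 𝒳 j, Q (fun j => (x j, y j))

lemma margA_sum {Q : (∀ j, 𝒳 j × 𝒴 j) → ℝ} : ∑ x, margA Q x = ∑ z, Q z :=
  (sumPair Q).symm

lemma margB_sum {Q : (∀ j, 𝒳 j × 𝒴 j) → ℝ} : ∑ y, margB Q y = ∑ z, Q z := by
  rw [sumPair Q, Finset.sum_comm]; rfl

lemma le_margA {Q : (∀ j, 𝒳 j × 𝒴 j) → ℝ} (hQ0 : ∀ z, 0 ≤ Q z) (z : ∀ j, 𝒳 j × 𝒴 j) :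
    Q z ≤ margA Q (fun j => (z j).1) := by
  have := Finset.single_le_sum (f := fun y : ∀ j, 𝒴 j => Q (fun j => ((z j).1, y j)))
    (fun y _ => hQ0 _) (Finset.mem_univ (fun j => (z j).2))
  exact this

lemma le_margB {Q : (∀ j, 𝒳 j × 𝒴 j) → ℝ} (hQ0 : ∀ z, 0 ≤ Q z) (z : ∀ j, 𝒳 j × 𝒴 j) :
    Q z ≤ margB Q (fun j => (z j).2) := by
  have := Finset.single_le_sum (f := fun x : ∀ j, 𝒳 j => Q (fun j => (x j, (z j).2)))
    (fun x _ => hQ0 _) (Finset.mem_univ (fun j => (z j).1))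
  exact this

lemma marg_margA {Q : (∀ j, 𝒳 j × 𝒴 j) → ℝ} (j : Fin k) (a : 𝒳 j) :
    (∑ b, marg Q j (a, b)) = marg (margA Q) j a := by
  have inner : ∀ z : ∀ i, 𝒳 i × 𝒴 i,
      (∑ b, if z j = (a, b) then Q z else 0) = if (z j).1 = a then Q z else 0 := by
    intro z
    by_cases h1 : (z j).1 = a
    · simp [Prod.ext_iff, h1]
    · simp [Prod.ext_iff, h1]
  rw [show (∑ b, marg Q j (a, b))
      = ∑ b, ∑ z : ∀ i, 𝒳 i × 𝒴 i, if z j = (a, b) then Q z else 0 from rfl,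
    Finset.sum_comm, Finset.sum_congr rfl fun z _ => inner z,
    sumPair (fun z => if (z j).1 = a then Q z else 0)]
  have hR : marg (margA Q) j a = ∑ x : ∀ i, 𝒳 i, ∑ y : ∀ i, 𝒴 i,
      (if x j = a then Q (fun i => (x i, y i)) else 0) := by
    rw [marg]
    refine Finset.sum_congr rfl fun x _ => ?_
    by_cases hx : x j = a
    · simp only [hx, if_true]; rfl
    · simp only [hx, if_false, Finset.sum_const_zero]
  rw [hR]

lemma marg_margB {Q : (∀ j, 𝒳 j × 𝒴 j) → ℝ} (j : Fin k) (b : 𝒴 j) :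
    (∑ a, marg Q j (a, b)) = marg (margB Q) j b := by
  have inner : ∀ z : ∀ i, 𝒳 i × 𝒴 i,
      (∑ a, if z j = (a, b) then Q z else 0) = if (z j).2 = b then Q z else 0 := by
    intro z
    by_cases h1 : (z j).2 = b
    · simp [Prod.ext_iff, h1]
    · simp [Prod.ext_iff, h1]
  rw [show (∑ a, marg Q j (a, b))
      = ∑ a, ∑ z : ∀ i, 𝒳 i × 𝒴 i, if z j = (a, b) then Q z else 0 from rfl,
    Finset.sum_comm, Finset.sum_congr rfl fun z _ => inner z,
    sumPair (fun z => if (z j).2 = b then Q z else 0)]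
  have hR : marg (margB Q) j b = ∑ y : ∀ i, 𝒴 i, ∑ x : ∀ i, 𝒳 i,
      (if y j = b then Q (fun i => (x i, y i)) else 0) := by
    rw [marg]
    refine Finset.sum_congr rfl fun y _ => ?_
    by_cases hy : y j = b
    · simp only [hy, if_true]; rfl
    · simp only [hy, if_false, Finset.sum_const_zero]
  rw [hR, Finset.sum_comm]

lemma klD_superadd {Q : (∀ j, 𝒳 j × 𝒴 j) → ℝ} {P1 : (∀ j, 𝒳 j) → ℝ} {P2 : (∀ j, 𝒴 j) → ℝ}
    (hQ : probVec Q) (hQs : ∀ z, tensorM P1 P2 z = 0 → Q z = 0) :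
    klD (margA Q) P1 + klD (margB Q) P2 ≤ klD Q (tensorM P1 P2) := by
  have hQA0 : ∀ x, 0 ≤ margA Q x := fun x => Finset.sum_nonneg fun y _ => hQ.1 _
  have hQB0 : ∀ y, 0 ≤ margB Q y := fun y => Finset.sum_nonneg fun x _ => hQ.1 _
  have hQA : probVec (margA Q) := ⟨hQA0, by rw [margA_sum, hQ.2]⟩
  have hQB : probVec (margB Q) := ⟨hQB0, by rw [margB_sum, hQ.2]⟩
  have hT : probVec (tensorM (margA Q) (margB Q)) := probVec_tensor hQA hQB
  have hsupp : ∀ z, tensorM (margA Q) (margB Q) z = 0 → Q z = 0 := by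
    intro z hz
    rcases mul_eq_zero.mp hz with h | h
    · exact le_antisymm (h ▸ le_margA hQ.1 z) (hQ.1 z)
    · exact le_antisymm (h ▸ le_margB hQ.1 z) (hQ.1 z)
  have hg : 0 ≤ ∑ z, Q z * Real.logb 2 (Q z / tensorM (margA Q) (margB Q) z) :=
    gibbs_s6 hQ.1 hT.1 hQ.2 (le_of_eq hT.2) hsupp
  have key : ∀ z, Q z * Real.logb 2 (Q z / tensorM P1 P2 z)
      = Q z * Real.logb 2 (Q z / tensorM (margA Q) (margB Q) z)
        + Q z * Real.logb 2 (margA Q (fun j => (z j).1) / P1 (fun j => (z j).1))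
        + Q z * Real.logb 2 (margB Q (fun j => (z j).2) / P2 (fun j => (z j).2)) := by
    intro z
    rcases eq_or_lt_of_le (hQ.1 z) with h | h
    · rw [← h]; ring
    · have hqa : margA Q (fun j => (z j).1) ≠ 0 :=
        ne_of_gt (lt_of_lt_of_le h (le_margA hQ.1 z))
      have hqb : margB Q (fun j => (z j).2) ≠ 0 :=
        ne_of_gt (lt_of_lt_of_le h (le_margB hQ.1 z))
      have hp : tensorM P1 P2 z ≠ 0 := fun hp => h.ne' (hQs z hp)
      have hp1 : P1 (fun j => (z j).1) ≠ 0 := fun h1 => hp (mul_eq_zero.mpr (Or.inl h1))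
      have hp2 : P2 (fun j => (z j).2) ≠ 0 := fun h2 => hp (mul_eq_zero.mpr (Or.inr h2))
      rw [show tensorM P1 P2 z = P1 (fun j => (z j).1) * P2 (fun j => (z j).2) from rfl,
        show tensorM (margA Q) (margB Q) z
          = margA Q (fun j => (z j).1) * margB Q (fun j => (z j).2) from rfl,
        logb_split h.ne' hqa hqb hp1 hp2]
      ring
  have eA : ∑ z, Q z * Real.logb 2 (margA Q (fun j => (z j).1) / P1 (fun j => (z j).1))
      = klD (margA Q) P1 := by
    rw [sumPair (fun z => Q z
      * Real.logb 2 (margA Q (fun j => (z j).1) / P1 (fun j => (z j).1))), klD]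
    refine Finset.sum_congr rfl fun x _ => ?_
    rw [show margA Q x * Real.logb 2 (margA Q x / P1 x)
      = ∑ y : ∀ j, 𝒴 j, Q (fun j => (x j, y j)) * Real.logb 2 (margA Q x / P1 x) from
        by rw [← Finset.sum_mul]; rfl]
  have eB : ∑ z, Q z * Real.logb 2 (margB Q (fun j => (z j).2) / P2 (fun j => (z j).2))
      = klD (margB Q) P2 := by
    rw [sumPair (fun z => Q z
      * Real.logb 2 (margB Q (fun j => (z j).2) / P2 (fun j => (z j).2))),
      Finset.sum_comm, klD]
    refine Finset.sum_congr rfl fun y _ => ?_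
    rw [show margB Q y * Real.logb 2 (margB Q y / P2 y)
      = ∑ x : ∀ j, 𝒳 j, Q (fun j => (x j, y j)) * Real.logb 2 (margB Q y / P2 y) from
        by rw [← Finset.sum_mul]; rfl]
  have main : klD Q (tensorM P1 P2)
      = (∑ z, Q z * Real.logb 2 (Q z / tensorM (margA Q) (margB Q) z))
        + klD (margA Q) P1 + klD (margB Q) P2 := by
    rw [klD, Finset.sum_congr rfl fun z _ => key z]
    simp only [Finset.sum_add_distrib, eA, eB]
  linarith

end Pairs

/-- additivity of `H_{α,θ}` under tensor products. -/
theorem stmt6 {k : ℕ} (hk : 1 ≤ k) (𝒳 𝒴 : Fin k → Type)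
    [∀ i, Fintype (𝒳 i)] [∀ i, DecidableEq (𝒳 i)]
    [∀ i, Fintype (𝒴 i)] [∀ i, DecidableEq (𝒴 i)]
    (α : ℝ) (hα : α ∈ Set.Ico (0 : ℝ) 1) (θ : Fin k → ℝ) (hθ : probVec θ)
    (P1 : (∀ i, 𝒳 i) → ℝ) (P2 : (∀ i, 𝒴 i) → ℝ)
    (hP10 : ∀ x, 0 ≤ P1 x) (hP20 : ∀ y, 0 ≤ P2 y)
    (hP1ne : P1 ≠ 0) (hP2ne : P2 ≠ 0) :
    Hat α θ (tensorM P1 P2) = Hat α θ P1 + Hat α θ P2 := by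
  obtain ⟨hα0, hα1⟩ := hα
  have hc : 0 ≤ α / (1 - α) := div_nonneg hα0 (by linarith)
  have hθ0 := hθ.1
  obtain ⟨x0, hx0⟩ := Function.ne_iff.mp hP1ne
  obtain ⟨y0, hy0⟩ := Function.ne_iff.mp hP2ne
  simp only [Pi.zero_apply] at hx0 hy0
  have hs1 : 0 < ∑ x, P1 x := Finset.sum_pos' (fun x _ => hP10 x)
    ⟨x0, Finset.mem_univ _, lt_of_le_of_ne (hP10 x0) (Ne.symm hx0)⟩
  have hs2 : 0 < ∑ y, P2 y := Finset.sum_pos' (fun y _ => hP20 y)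
    ⟨y0, Finset.mem_univ _, lt_of_le_of_ne (hP20 y0) (Ne.symm hy0)⟩
  have hT0 : ∀ z, 0 ≤ tensorM P1 P2 z := fun z => mul_nonneg (hP10 _) (hP20 _)
  have hs12 : 0 < ∑ z, tensorM P1 P2 z := Finset.sum_pos' (fun z _ => hT0 z)
    ⟨fun j => (x0 j, y0 j), Finset.mem_univ _, by
      show 0 < P1 _ * P2 _
      exact mul_pos (lt_of_le_of_ne (hP10 x0) (Ne.symm hx0))
        (lt_of_le_of_ne (hP20 y0) (Ne.symm hy0))⟩
  have hT12ne : tensorM P1 P2 ≠ 0 := by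
    intro h; rw [h] at hs12; simp at hs12
  unfold Hat
  have hbdd1 := hat_bdd (𝒳 := 𝒳) hc hθ0 hP10 hs1
  have hbdd2 := hat_bdd (𝒳 := 𝒴) hc hθ0 hP20 hs2
  have hbdd12 := hat_bdd (𝒳 := fun j => 𝒳 j × 𝒴 j) hc hθ0 hT0 hs12
  have hne1 := hat_nonempty (𝒳 := 𝒳) α θ hP1ne
  have hne2 := hat_nonempty (𝒳 := 𝒴) α θ hP2ne
  have hne12 := hat_nonempty (𝒳 := fun j => 𝒳 j × 𝒴 j) α θ hT12ne
  apply le_antisymm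
  · apply csSup_le hne12
    rintro v ⟨Q, hQ, hQs, rfl⟩
    have hQA : probVec (margA Q) :=
      ⟨fun x => Finset.sum_nonneg fun y _ => hQ.1 _, by rw [margA_sum, hQ.2]⟩
    have hQB : probVec (margB Q) :=
      ⟨fun y => Finset.sum_nonneg fun x _ => hQ.1 _, by rw [margB_sum, hQ.2]⟩
    have hQAs : ∀ x, P1 x = 0 → margA Q x = 0 := by
      intro x hx
      apply Finset.sum_eq_zero
      intro y _
      apply hQs
      show P1 x * P2 _ = 0
      rw [hx, zero_mul]
    have hQBs : ∀ y, P2 y = 0 → margB Q y = 0 := by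
      intro y hy
      apply Finset.sum_eq_zero
      intro x _
      apply hQs
      show P1 _ * P2 y = 0
      rw [hy, mul_zero]
    have hH : ∀ j, shEnt (marg Q j) ≤ shEnt (marg (margA Q) j) + shEnt (marg (margB Q) j) := by
      intro j
      have h := shEnt_subadd (m := marg Q j) (probVec_marg hQ j)
      rwa [show (fun a => ∑ b, marg Q j (a, b)) = marg (margA Q) j from
          funext fun a => marg_margA j a,
        show (fun b => ∑ a, marg Q j (a, b)) = marg (margB Q) j from
          funext fun b => marg_margB j b] at h
    have hK := klD_superadd hQ hQs
    have hsum : ∑ j, θ j * shEnt (marg Q j)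
        ≤ (∑ j, θ j * shEnt (marg (margA Q) j)) + ∑ j, θ j * shEnt (marg (margB Q) j) := by
      rw [← Finset.sum_add_distrib]
      refine Finset.sum_le_sum fun j _ => ?_
      rw [← mul_add]
      exact mul_le_mul_of_nonneg_left (hH j) (hθ0 j)
    have hmul := mul_le_mul_of_nonneg_left hK hc
    have m1 : ((∑ j, θ j * shEnt (marg (margA Q) j)) - α / (1 - α) * klD (margA Q) P1)
        ∈ { v : ℝ | ∃ Q : (∀ j, 𝒳 j) → ℝ, probVec Q ∧ (∀ x, P1 x = 0 → Q x = 0) ∧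
          v = (∑ j, θ j * shEnt (marg Q j)) - α / (1 - α) * klD Q P1 } :=
      ⟨margA Q, hQA, hQAs, rfl⟩
    have m2 : ((∑ j, θ j * shEnt (marg (margB Q) j)) - α / (1 - α) * klD (margB Q) P2)
        ∈ { v : ℝ | ∃ Q : (∀ j, 𝒴 j) → ℝ, probVec Q ∧ (∀ y, P2 y = 0 → Q y = 0) ∧
          v = (∑ j, θ j * shEnt (marg Q j)) - α / (1 - α) * klD Q P2 } :=
      ⟨margB Q, hQB, hQBs, rfl⟩
    have l1 := le_csSup hbdd1 m1
    have l2 := le_csSup hbdd2 m2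
    linarith
  · have key : ∀ v1 ∈ { v : ℝ | ∃ Q : (∀ j, 𝒳 j) → ℝ, probVec Q ∧
        (∀ x, P1 x = 0 → Q x = 0) ∧
        v = (∑ j, θ j * shEnt (marg Q j)) - α / (1 - α) * klD Q P1 },
        ∀ v2 ∈ { v : ℝ | ∃ Q : (∀ j, 𝒴 j) → ℝ, probVec Q ∧
        (∀ y, P2 y = 0 → Q y = 0) ∧
        v = (∑ j, θ j * shEnt (marg Q j)) - α / (1 - α) * klD Q P2 },
        v1 + v2 ≤ sSup { v : ℝ | ∃ Q : (∀ j, 𝒳 j × 𝒴 j) → ℝ, probVec Q ∧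
          (∀ z, tensorM P1 P2 z = 0 → Q z = 0) ∧
          v = (∑ j, θ j * shEnt (marg Q j)) - α / (1 - α) * klD Q (tensorM P1 P2) } := by
      rintro v1 ⟨Q1, hQ1, hQ1s, rfl⟩ v2 ⟨Q2, hQ2, hQ2s, rfl⟩
      apply le_csSup hbdd12
      refine ⟨tensorM Q1 Q2, probVec_tensor hQ1 hQ2, tensor_supp hQ1s hQ2s, ?_⟩
      have hent : ∀ j, shEnt (marg (tensorM Q1 Q2) j)
          = shEnt (marg Q1 j) + shEnt (marg Q2 j) := by
        intro j
        rw [show marg (tensorM Q1 Q2) j = fun c => marg Q1 j c.1 * marg Q2 j c.2 from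
          funext fun c => marg_tensor Q1 Q2 j c]
        exact shEnt_prod (probVec_marg hQ1 j).2 (probVec_marg hQ2 j).2
      rw [klD_tensor hQ1 hQ2 hQ1s hQ2s,
        Finset.sum_congr rfl fun j (_ : j ∈ univ) => show θ j * shEnt (marg (tensorM Q1 Q2) j)
          = θ j * (shEnt (marg Q1 j) + shEnt (marg Q2 j)) from by rw [hent j]]
      simp only [mul_add, Finset.sum_add_distrib]
      ring
    have h1 : sSup { v : ℝ | ∃ Q : (∀ j, 𝒳 j) → ℝ, probVec Q ∧
        (∀ x, P1 x = 0 → Q x = 0) ∧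
        v = (∑ j, θ j * shEnt (marg Q j)) - α / (1 - α) * klD Q P1 }
        ≤ sSup { v : ℝ | ∃ Q : (∀ j, 𝒳 j × 𝒴 j) → ℝ, probVec Q ∧
          (∀ z, tensorM P1 P2 z = 0 → Q z = 0) ∧
          v = (∑ j, θ j * shEnt (marg Q j)) - α / (1 - α) * klD Q (tensorM P1 P2) }
          - sSup { v : ℝ | ∃ Q : (∀ j, 𝒴 j) → ℝ, probVec Q ∧
          (∀ y, P2 y = 0 → Q y = 0) ∧
          v = (∑ j, θ j * shEnt (marg Q j)) - α / (1 - α) * klD Q P2 } := by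
      apply csSup_le hne1
      intro v1 hv1
      have h2 := csSup_le hne2 (fun v2 hv2 => by
        have := key v1 hv1 v2 hv2
        linarith : ∀ v2 ∈ _, v2 ≤ _ - v1)
      linarith
    linarith
end
end

section
/- Let X ⊆ ℝⁿ be nonempty, compact and convex, and let f, g : X → ℝ be continuous and concave, with g strictly concave. Let M = {x ∈ X : f(x) = max_{y∈X} f(y)}; M is nonempty, compact and convex, so g has a unique maximizer x̄ on M. For each t > 0 let x*(t) ∈ X be the unique maximizer of f + t·g over X, and let v(t) =ف(x*(t)) + t·g(x*(t)) be the maximum value, i.e. v(t) = max_{x∈X}(f(x)+t·g(x)). Then: (i) x*(t) → x̄ as t → 0⁺; (ii) v extends continuously to [0,∞) by setting v(0) = f(x̄); (iii) the right derivative of v at 0 exists and equals g(x̄). -/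
open Filter Topology Set

/-!
For `t > 0` compare the penalized maximizer `x*(t)` with `x̄`: optimality of `x*(t)` at `x̄`
and of `x̄` for `f` give `g x̄ ≤ g (x*(t))` and `f x̄ - t (sup_X g - g x̄) ≤ f (x*(t)) ≤ f x̄`.
Hence every cluster point of `x*(t)` as `t → 0⁺` maximizes `f` and beats `x̄` for `g`, so it is
`x̄` by strict concavity of `g` on the convex set of maximizers of `f`; compactness turns this
into convergence. The same two inequalities squeeze the difference quotient
`(v t - f x̄) / t` between `g x̄` and `g (x*(t)) → g x̄`.
-/

theorem sSup_image_eq_of_isMaxOn {α β : Type*} [ConditionallyCompleteLinearOrder β]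
    {φ : α → β} {s : Set α} {a : α} (ha : a ∈ s) (hmax : IsMaxOn φ s a) :
    sSup (φ '' s) = φ a := by
  rw [sSup_image']
  exact hmax.iSup_eq ha

theorem ConcaveOn.convex_setOf_isMaxOn {E : Type*} [AddCommMonoid E] [Module ℝ E]
    {s : Set E} {f : E → ℝ} (hf : ConcaveOn ℝ s f) : Convex ℝ {x ∈ s | IsMaxOn f s x} := by
  intro x ⟨hx, hxmax⟩ y ⟨hy, hymax⟩ a b ha hb hab
  refine ⟨hf.1 hx hy ha hb hab, fun w hw => ?_⟩
  calc f w = a * f w + b * f w := by rw [← add_mul, hab, one_mul]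
    _ ≤ a * f x + b * f y := by gcongr; exacts [hxmax hw, hymax hw]
    _ ≤ f (a • x + b • y) := hf.2 hx hy ha hb hab

theorem MapClusterPt.comp_continuousWithinAt {α E Y : Type*} [TopologicalSpace E]
    [TopologicalSpace Y] {l : Filter α} {u : α → E} {s : Set E} {z : E} {φ : E → Y}
    (hz : MapClusterPt z l u) (hφ : ContinuousWithinAt φ s z) (hu : ∀ᶠ a in l, u a ∈ s) :
    MapClusterPt (φ z) l (φ ∘ u) :=
  hz.tendsto_comp' (hφ.mono_left (inf_le_inf_left _ (tendsto_principal.2 hu)))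

theorem le_of_isMaxOn_add_mul {α : Type*} {X : Set α} {f g : α → ℝ} {xbar x : α} {t : ℝ}
    (ht : 0 < t) (hxbar : xbar ∈ X) (hfmax : IsMaxOn f X xbar) (hx : x ∈ X)
    (hxmax : IsMaxOn (fun y => f y + t * g y) X x) : g xbar ≤ g x := by
  have hpen : f xbar + t * g xbar ≤ f x + t * g x := hxmax hxbar
  have hf : f x ≤ f xbar := hfmax hx
  nlinarith

theorem hasDerivWithinAt_Ioi_of_le_of_le {v c : ℝ → ℝ} {a b : ℝ}
    (hc : Tendsto c (𝓝[>] a) (𝓝 b)) (hlow : ∀ t > a, v a + (t - a) * b ≤ v t)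
    (hup : ∀ t > a, v t ≤ v a + (t - a) * c t) : HasDerivWithinAt v b (Ioi a) a := by
  rw [hasDerivWithinAt_iff_tendsto_slope, sdiff_singleton_eq_self self_notMem_Ioi]
  refine tendsto_of_tendsto_of_tendsto_of_le_of_le' tendsto_const_nhds hc ?_ ?_ <;>
    filter_upwards [self_mem_nhdsWithin] with t (ht : a < t) <;>
    rw [slope_def_field]
  · rw [le_div_iff₀ (sub_pos.2 ht)]
    linarith [hlow t ht]
  · rw [div_le_iff₀ (sub_pos.2 ht)]
    linarith [hup t ht]

theorem tendsto_penalized_argmax {E : Type*} [TopologicalSpace E] [AddCommGroup E]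
    [Module ℝ E] {X : Set E} {f g : E → ℝ} (hX : IsCompact X) (hf : ContinuousOn f X)
    (hg : ContinuousOn g X) (hfc : ConcaveOn ℝ X f) (hgc : StrictConcaveOn ℝ X g)
    {xbar : E} (hxbar : xbar ∈ X) (hfmax : IsMaxOn f X xbar)
    (hgmax : IsMaxOn g {x ∈ X | IsMaxOn f X x} xbar) {xstar : ℝ → E}
    (hxstar : ∀ t > 0, xstar t ∈ X ∧ IsMaxOn (fun y => f y + t * g y) X (xstar t)) :
    Tendsto xstar (𝓝[>] 0) (𝓝 xbar) := by
  have hmem : ∀ᶠ t in 𝓝[>] (0 : ℝ), xstar t ∈ X :=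
    eventually_nhdsWithin_of_forall fun t ht => (hxstar t ht).1
  have hg_ge : ∀ᶠ t in 𝓝[>] (0 : ℝ), g xbar ≤ g (xstar t) :=
    eventually_nhdsWithin_of_forall fun t ht =>
      le_of_isMaxOn_add_mul ht hxbar hfmax (hxstar t ht).1 (hxstar t ht).2
  obtain ⟨B, hB⟩ := hX.bddAbove_image hg
  have hf_tendsto : Tendsto (fun t => f (xstar t)) (𝓝[>] 0) (𝓝 (f xbar)) := by
    have hlow : Tendsto (fun t : ℝ => f xbar - t * (B - g xbar)) (𝓝[>] 0) (𝓝 (f xbar)) := by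
      have ht : Tendsto (fun t : ℝ => t) (𝓝[>] 0) (𝓝 0) := nhdsWithin_le_nhds
      simpa using (ht.mul_const (B - g xbar)).const_sub (f xbar)
    refine tendsto_of_tendsto_of_tendsto_of_le_of_le' hlow tendsto_const_nhds ?_ ?_
    · filter_upwards [self_mem_nhdsWithin] with t (ht : 0 < t)
      have hpen : f xbar + t * g xbar ≤ f (xstar t) + t * g (xstar t) := (hxstar t ht).2 hxbar
      have hgB : g (xstar t) ≤ B := hB (mem_image_of_mem g (hxstar t ht).1)
      nlinarith
    · filter_upwards [hmem] with t ht using hfmax ht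
  refine hX.tendsto_nhds_of_unique_mapClusterPt hmem fun z hzX hz => ?_
  have hfz : f z = f xbar :=
    eq_of_nhds_neBot ((hz.comp_continuousWithinAt (hf z hzX) hmem).clusterPt.mono hf_tendsto)
  have hgz : g xbar ≤ g z :=
    isClosed_Ici.mem_of_mapClusterPt (hz.comp_continuousWithinAt (hg z hzX) hmem) hg_ge
  have hzM : z ∈ {x ∈ X | IsMaxOn f X x} := ⟨hzX, fun y hy => hfz ▸ hfmax hy⟩
  exact (hgc.subset (sep_subset _ _) hfc.convex_setOf_isMaxOn).eq_of_isMaxOn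
    (fun y hy => (hgmax hy).trans hgz) hgmax hzM ⟨hxbar, hfmax⟩

theorem stmt8_general {n : ℕ} (X : Set (Fin n → ℝ))
    (hXcomp : IsCompact X)
    (f g : (Fin n → ℝ) → ℝ)
    (hf : ContinuousOn f X) (hg : ContinuousOn g X)
    (hfc : ConcaveOn ℝ X f) (hgc : StrictConcaveOn ℝ X g)
    (M : Set (Fin n → ℝ)) (hM : M = {x ∈ X | ∀ y ∈ X, f y ≤ f x})
    (xbar : Fin n → ℝ) (hxbarM : xbar ∈ M) (hxbarmax : ∀ y ∈ M, g y ≤ g xbar)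
    (xstar : ℝ → Fin n → ℝ)
    (hxstar : ∀ t : ℝ, 0 < t → xstar t ∈ X ∧
      ∀ y ∈ X, f y + t * g y ≤ f (xstar t) + t * g (xstar t))
    (v : ℝ → ℝ) (hv : ∀ t : ℝ, v t = sSup ((fun x => f x + t * g x) '' X)) :
    Filter.Tendsto xstar (nhdsWithin 0 (Set.Ioi 0)) (nhds xbar) ∧
    Filter.Tendsto v (nhdsWithin 0 (Set.Ioi 0)) (nhds (f xbar)) ∧
    HasDerivWithinAt v (g xbar) (Set.Ioi 0) 0 := by
  subst hM
  obtain ⟨hxbar, hfmax⟩ := hxbarM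
  have hconv : Tendsto xstar (𝓝[>] 0) (𝓝 xbar) :=
    tendsto_penalized_argmax hXcomp hf hg hfc hgc hxbar hfmax hxbarmax hxstar
  have hg_tendsto : Tendsto (fun t => g (xstar t)) (𝓝[>] 0) (𝓝 (g xbar)) :=
    (hg xbar hxbar).tendsto.comp <| tendsto_nhdsWithin_iff.2
      ⟨hconv, eventually_nhdsWithin_of_forall fun t ht => (hxstar t ht).1⟩
  have hv0 : v 0 = f xbar := by
    rw [hv, sSup_image_eq_of_isMaxOn hxbar fun y hy => by simpa using hfmax y hy, zero_mul,
      add_zero]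
  have hvt : ∀ t > 0, v t = f (xstar t) + t * g (xstar t) := fun t ht =>
    (hv t).trans (sSup_image_eq_of_isMaxOn (hxstar t ht).1 (hxstar t ht).2)
  have hderiv : HasDerivWithinAt v (g xbar) (Ioi 0) 0 := by
    refine hasDerivWithinAt_Ioi_of_le_of_le hg_tendsto (fun t ht => ?_) (fun t ht => ?_) <;>
      rw [hvt t ht, hv0, sub_zero]
    · exact (hxstar t ht).2 xbar hxbar
    · linarith [hfmax _ (hxstar t ht).1]
  exact ⟨hconv, hv0 ▸ hderiv.continuousWithinAt, hderiv⟩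

/-- let `X ⊆ ℝⁿ` be nonempty, compact and convex, `f, g` continuous and
concave on `X` with `g` strictly concave, `M` the set of maximizers of `f`, `x̄` a
maximizer of `g` on `M`, for each `t > 0` let `x*(t)` be a maximizer of `f + t·g` on
`X`, and let `v(t) = max_{x∈X}(f(x)+t·g(x))`.  Then `x*(t) → x̄` as `t → 0⁺`, `v`
extends continuously to `0` with value `f(x̄)`, and the right derivative of `v` at `0`
is `g(x̄)`. -/
theorem stmt8 {n : ℕ} (X : Set (Fin n → ℝ))
    (hXne : X.Nonempty) (hXcomp : IsCompact X) (hXconv : Convex ℝ X)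
    (f g : (Fin n → ℝ) → ℝ)
    (hf : ContinuousOn f X) (hg : ContinuousOn g X)
    (hfc : ConcaveOn ℝ X f) (hgc : StrictConcaveOn ℝ X g)
    (M : Set (Fin n → ℝ)) (hM : M = {x ∈ X | ∀ y ∈ X, f y ≤ f x})
    (xbar : Fin n → ℝ) (hxbarM : xbar ∈ M) (hxbarmax : ∀ y ∈ M, g y ≤ g xbar)
    (xstar : ℝ → Fin n → ℝ)
    (hxstar : ∀ t : ℝ, 0 < t → xstar t ∈ X ∧
      ∀ y ∈ X, f y + t * g y ≤ f (xstar t) + t * g (xstar t))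
    (v : ℝ → ℝ) (hv : ∀ t : ℝ, v t = sSup ((fun x => f x + t * g x) '' X)) :
    Filter.Tendsto xstar (nhdsWithin 0 (Set.Ioi 0)) (nhds xbar) ∧
    Filter.Tendsto v (nhdsWithin 0 (Set.Ioi 0)) (nhds (f xbar)) ∧
    HasDerivWithinAt v (g xbar) (Set.Ioi 0) 0 :=
  stmt8_general X hXcomp f g hf hg hfc hgc M hM xbar hxbarM hxbarmax xstar hxstar v hv
end

section
/- Let k ≥ 1, θ ∈ Δ([k]), and let P be a nonzero measure on a product 𝒳₁ × … × 𝒳ₖ of finite sets. For α ∈ (0,1), the maximizer Q_α in the definition of H_{α,θ}(P) is unique. Let M = {Q ∈ Δ(supp P) : Σ_{j=1}^k θ(j) H(Q_j) = H_{0,θ}(P)} be the set of maximizers at α = 0, and let Q₀ be the unique minimizer of Q ↦ D(Q‖P) over M. Then the right derivative of the map α ↦ H_{α,θ}(P) at α = 0 exists and equals −D(Q₀‖P). -/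
open Finset

noncomputable section

namespace Stmt9Aux

open Real Set

set_option linter.unusedSectionVars false

variable {k : ℕ} {𝒳 : Fin k → Type} [∀ i, Fintype (𝒳 i)] [∀ i, DecidableEq (𝒳 i)]

/-- Feasible set. -/
def feas (P : (∀ i, 𝒳 i) → ℝ) : Set ((∀ i, 𝒳 i) → ℝ) :=
  {Q | probVec Q ∧ ∀ x, P x = 0 → Q x = 0}

/-- Weighted sum of marginal entropies. -/
def entF (θ : Fin k → ℝ) (Q : (∀ i, 𝒳 i) → ℝ) : ℝ := ∑ j, θ j * shEnt (marg Q j)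

/-- The objective functional. -/
def objF (α : ℝ) (θ : Fin k → ℝ) (P Q : (∀ i, 𝒳 i) → ℝ) : ℝ :=
  entF θ Q - α / (1 - α) * klD Q P

lemma Hat_eq_sSup (α : ℝ) (θ : Fin k → ℝ) (P : (∀ i, 𝒳 i) → ℝ) :
    Hat α θ P = sSup (objF α θ P '' feas P) := by
  unfold Hat
  congr 1
  ext v
  constructor
  · rintro ⟨Q, h1, h2, rfl⟩
    exact ⟨Q, ⟨h1, h2⟩, rfl⟩
  · rintro ⟨Q, ⟨h1, h2⟩, rfl⟩
    exact ⟨Q, h1, h2, rfl⟩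

lemma objF_zero (θ : Fin k → ℝ) (P Q : (∀ i, 𝒳 i) → ℝ) : objF 0 θ P Q = entF θ Q := by
  simp [objF]

lemma shEnt_eq {X : Type*} [Fintype X] (Q : X → ℝ) :
    shEnt Q = -(∑ x, Q x * Real.log (Q x)) / Real.log 2 := by
  unfold shEnt Real.logb
  rw [neg_div, neg_inj, Finset.sum_div]
  exact Finset.sum_congr rfl fun x _ => by ring

lemma klD_eq (P Q : (∀ i, 𝒳 i) → ℝ) :
    klD Q P = ∑ x, (if P x = 0 then 0 else
      (Q x * Real.log (Q x) - Q x * Real.log (P x)) / Real.log 2) := by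
  unfold klD
  refine Finset.sum_congr rfl fun x _ => ?_
  by_cases hP : P x = 0
  · simp [hP]
  · simp only [hP, if_false]
    by_cases hQ : Q x = 0
    · simp [hQ]
    · rw [Real.logb, Real.log_div hQ hP]
      ring

lemma continuous_klD (P : (∀ i, 𝒳 i) → ℝ) : Continuous (fun Q => klD Q P) := by
  have : (fun Q : (∀ i, 𝒳 i) → ℝ => klD Q P) = fun Q => ∑ x, (if P x = 0 then 0 else
      (Q x * Real.log (Q x) - Q x * Real.log (P x)) / Real.log 2) := by
    ext Q; exact klD_eq P Q
  rw [this]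
  refine continuous_finset_sum _ fun x _ => ?_
  by_cases hP : P x = 0
  · simp only [hP, if_true]; exact continuous_const
  · simp only [hP, if_false]
    exact ((Real.continuous_mul_log.comp (continuous_apply x)).sub
      ((continuous_apply x).mul continuous_const)).div_const _

lemma continuous_marg (j : Fin k) (a : 𝒳 j) :
    Continuous (fun Q : (∀ i, 𝒳 i) → ℝ => marg Q j a) := by
  unfold marg
  refine continuous_finset_sum _ fun x _ => ?_
  by_cases h : x j = a
  · simp only [h, if_true]; exact continuous_apply x
  · simp only [h, if_false]; exact continuous_const

lemma continuous_entF (θ : Fin k → ℝ) : Continuous (entF θ (𝒳 := 𝒳)) := by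
  unfold entF
  refine continuous_finset_sum _ fun j _ => continuous_const.mul ?_
  have : (fun Q : (∀ i, 𝒳 i) → ℝ => shEnt (marg Q j)) =
      fun Q => -(∑ a, marg Q j a * Real.log (marg Q j a)) / Real.log 2 := by
    ext Q; exact shEnt_eq _
  rw [this]
  exact ((continuous_finset_sum _ fun a _ =>
    Real.continuous_mul_log.comp (continuous_marg j a)).neg).div_const _

lemma continuous_objF (α : ℝ) (θ : Fin k → ℝ) (P : (∀ i, 𝒳 i) → ℝ) :
    Continuous (objF α θ P) :=
  (continuous_entF θ).sub (continuous_const.mul (continuous_klD P))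

lemma isCompact_feas (P : (∀ i, 𝒳 i) → ℝ) : IsCompact (feas P) := by
  have h1 : feas P = stdSimplex ℝ (∀ i, 𝒳 i) ∩ {Q | ∀ x, P x = 0 → Q x = 0} := rfl
  rw [h1]
  refine isCompact_stdSimplex _ _ |>.inter_right ?_
  have : {Q : (∀ i, 𝒳 i) → ℝ | ∀ x, P x = 0 → Q x = 0} =
      ⋂ x ∈ {x | P x = 0}, (fun Q : (∀ i, 𝒳 i) → ℝ => Q x) ⁻¹' {0} := by
    ext Q; simp [Set.mem_iInter]
  rw [this]
  exact isClosed_biInter fun x _ => isClosed_singleton.preimage (continuous_apply x)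

lemma convex_feas (P : (∀ i, 𝒳 i) → ℝ) : Convex ℝ (feas P) := by
  intro Q hQ R hR a b ha hb hab
  refine ⟨⟨fun x => add_nonneg (mul_nonneg ha (hQ.1.1 x)) (mul_nonneg hb (hR.1.1 x)), ?_⟩,
    fun x hx => ?_⟩
  · have : ∑ x, (a • Q + b • R) x = a * ∑ x, Q x + b * ∑ x, R x := by
      simp only [Pi.add_apply, Pi.smul_apply, smul_eq_mul]
      rw [Finset.sum_add_distrib, Finset.mul_sum, Finset.mul_sum]
    rw [this, hQ.1.2, hR.1.2]; linarith
  · simp only [Pi.add_apply, Pi.smul_apply, smul_eq_mul, hQ.2 x hx, hR.2 x hx,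
      mul_zero, add_zero]

lemma feas_nonempty (P : (∀ i, 𝒳 i) → ℝ) (hPne : P ≠ 0) : (feas P).Nonempty := by
  have : ∃ x₀, P x₀ ≠ 0 := by
    by_contra h
    push_neg at h
    exact hPne (funext fun x => h x)
  obtain ⟨x₀, hx₀⟩ := this
  refine ⟨fun x => if x = x₀ then 1 else 0, ⟨fun x => by positivity, ?_⟩, fun x hx => ?_⟩
  · simp
  · by_cases h : x = x₀
    · exact absurd (h ▸ hx) hx₀
    · simp [h]


lemma marg_nonneg {Q : (∀ i, 𝒳 i) → ℝ} (hQ : ∀ x, 0 ≤ Q x) (j : Fin k) (a : 𝒳 j) :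
    0 ≤ marg Q j a :=
  Finset.sum_nonneg fun x _ => by by_cases h : x j = a <;> simp [h, hQ x]

lemma marg_combo (Q R : (∀ i, 𝒳 i) → ℝ) (a b : ℝ) (j : Fin k) (u : 𝒳 j) :
    marg (a • Q + b • R) j u = a * marg Q j u + b * marg R j u := by
  unfold marg
  rw [Finset.mul_sum, Finset.mul_sum, ← Finset.sum_add_distrib]
  refine Finset.sum_congr rfl fun x _ => ?_
  by_cases h : x j = u <;> simp [h]

lemma shEnt_combo_le {X : Type*} [Fintype X] {m₁ m₂ : X → ℝ} (h1 : ∀ u, 0 ≤ m₁ u)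
    (h2 : ∀ u, 0 ≤ m₂ u) {a b : ℝ} (ha : 0 ≤ a) (hb : 0 ≤ b) (hab : a + b = 1) :
    a * shEnt m₁ + b * shEnt m₂ ≤ shEnt (fun u => a * m₁ u + b * m₂ u) := by
  rw [shEnt_eq, shEnt_eq, shEnt_eq]
  have hlog : (0:ℝ) < Real.log 2 := Real.log_pos one_lt_two
  have key : (∑ u, (a * m₁ u + b * m₂ u) * Real.log (a * m₁ u + b * m₂ u))
      ≤ a * (∑ u, m₁ u * Real.log (m₁ u)) + b * (∑ u, m₂ u * Real.log (m₂ u)) := by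
    rw [Finset.mul_sum, Finset.mul_sum, ← Finset.sum_add_distrib]
    refine Finset.sum_le_sum fun u _ => ?_
    have := Real.convexOn_mul_log.2 (Set.mem_Ici.2 (h1 u)) (Set.mem_Ici.2 (h2 u)) ha hb hab
    simpa using this
  calc a * (-(∑ u, m₁ u * Real.log (m₁ u)) / Real.log 2)
        + b * (-(∑ u, m₂ u * Real.log (m₂ u)) / Real.log 2)
      = -(a * (∑ u, m₁ u * Real.log (m₁ u)) + b * (∑ u, m₂ u * Real.log (m₂ u)))
          / Real.log 2 := by ring
    _ ≤ -(∑ u, (a * m₁ u + b * m₂ u) * Real.log (a * m₁ u + b * m₂ u)) / Real.log 2 :=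
        (div_le_div_iff_of_pos_right hlog).2 (neg_le_neg key)

lemma entF_combo_le (θ : Fin k → ℝ) (hθ0 : ∀ j, 0 ≤ θ j) {Q R : (∀ i, 𝒳 i) → ℝ}
    (hQ : ∀ x, 0 ≤ Q x) (hR : ∀ x, 0 ≤ R x) {a b : ℝ} (ha : 0 ≤ a) (hb : 0 ≤ b)
    (hab : a + b = 1) :
    a * entF θ Q + b * entF θ R ≤ entF θ (a • Q + b • R) := by
  unfold entF
  rw [Finset.mul_sum, Finset.mul_sum, ← Finset.sum_add_distrib]
  refine Finset.sum_le_sum fun j _ => ?_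
  have hmc : marg (a • Q + b • R) j = fun u => a * marg Q j u + b * marg R j u :=
    funext fun u => marg_combo Q R a b j u
  have key : a * shEnt (marg Q j) + b * shEnt (marg R j) ≤ shEnt (marg (a • Q + b • R) j) := by
    rw [hmc]
    exact shEnt_combo_le (fun u => marg_nonneg hQ j u) (fun u => marg_nonneg hR j u) ha hb hab
  calc a * (θ j * shEnt (marg Q j)) + b * (θ j * shEnt (marg R j))
      = θ j * (a * shEnt (marg Q j) + b * shEnt (marg R j)) := by ring
    _ ≤ θ j * shEnt (marg (a • Q + b • R) j) := mul_le_mul_of_nonneg_left key (hθ0 j)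

lemma klD_strict {P Q R : (∀ i, 𝒳 i) → ℝ} (hQ : Q ∈ feas P) (hR : R ∈ feas P)
    (hne : Q ≠ R) {a b : ℝ} (ha : 0 < a) (hb : 0 < b) (hab : a + b = 1) :
    klD (a • Q + b • R) P < a * klD Q P + b * klD R P := by
  have hlog : (0:ℝ) < Real.log 2 := Real.log_pos one_lt_two
  rw [klD_eq, klD_eq, klD_eq, Finset.mul_sum, Finset.mul_sum, ← Finset.sum_add_distrib]
  simp only [Pi.add_apply, Pi.smul_apply, smul_eq_mul]
  obtain ⟨x₀, hx₀⟩ : ∃ x, Q x ≠ R x := by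
    by_contra h; push_neg at h; exact hne (funext h)
  have hPx₀ : P x₀ ≠ 0 := fun h => hx₀ ((hQ.2 x₀ h).trans (hR.2 x₀ h).symm)
  refine Finset.sum_lt_sum (fun x _ => ?_) ⟨x₀, Finset.mem_univ x₀, ?_⟩
  · by_cases hP : P x = 0
    · simp [hP]
    · simp only [hP, if_false]
      have hcvx := Real.convexOn_mul_log.2 (Set.mem_Ici.2 (hQ.1.1 x)) (Set.mem_Ici.2 (hR.1.1 x))
        ha.le hb.le hab
      simp only [smul_eq_mul] at hcvx
      have rhs_eq : a * ((Q x * Real.log (Q x) - Q x * Real.log (P x)) / Real.log 2)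
          + b * ((R x * Real.log (R x) - R x * Real.log (P x)) / Real.log 2)
          = (a * (Q x * Real.log (Q x)) + b * (R x * Real.log (R x))
              - (a * Q x + b * R x) * Real.log (P x)) / Real.log 2 := by ring
      rw [rhs_eq]
      refine (div_le_div_iff_of_pos_right hlog).2 ?_
      exact sub_le_sub_right hcvx _
  · simp only [hPx₀, if_false]
    have hcvx := Real.strictConvexOn_mul_log.2 (Set.mem_Ici.2 (hQ.1.1 x₀))
      (Set.mem_Ici.2 (hR.1.1 x₀)) hx₀ ha hb hab
    simp only [smul_eq_mul] at hcvx
    have rhs_eq : a * ((Q x₀ * Real.log (Q x₀) - Q x₀ * Real.log (P x₀)) / Real.log 2)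
        + b * ((R x₀ * Real.log (R x₀) - R x₀ * Real.log (P x₀)) / Real.log 2)
        = (a * (Q x₀ * Real.log (Q x₀)) + b * (R x₀ * Real.log (R x₀))
            - (a * Q x₀ + b * R x₀) * Real.log (P x₀)) / Real.log 2 := by ring
    rw [rhs_eq]
    refine (div_lt_div_iff_of_pos_right hlog).2 ?_
    exact sub_lt_sub_right hcvx _

lemma objF_combo {θ : Fin k → ℝ} (hθ0 : ∀ j, 0 ≤ θ j) {α : ℝ} (hα : α ∈ Set.Ioo (0:ℝ) 1)
    {P Q R : (∀ i, 𝒳 i) → ℝ} (hQ : Q ∈ feas P) (hR : R ∈ feas P) (hne : Q ≠ R)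
    {a b : ℝ} (ha : 0 < a) (hb : 0 < b) (hab : a + b = 1) :
    a * objF α θ P Q + b * objF α θ P R < objF α θ P (a • Q + b • R) := by
  have hc : 0 < α / (1 - α) := div_pos hα.1 (by linarith [hα.2])
  have h1 := entF_combo_le θ hθ0 hQ.1.1 hR.1.1 ha.le hb.le hab
  have h2 := klD_strict hQ hR hne ha hb hab
  have h3 := mul_lt_mul_of_pos_left h2 hc
  unfold objF
  nlinarith [h3, h1]

lemma exists_max (θ : Fin k → ℝ) (P : (∀ i, 𝒳 i) → ℝ) (hPne : P ≠ 0) (α : ℝ) :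
    ∃ Q ∈ feas P, IsMaxOn (objF α θ P) (feas P) Q :=
  (isCompact_feas P).exists_isMaxOn (feas_nonempty P hPne) (continuous_objF α θ P).continuousOn

lemma Hat_eq_max {θ : Fin k → ℝ} {P Q : (∀ i, 𝒳 i) → ℝ} {α : ℝ}
    (hmax : IsMaxOn (objF α θ P) (feas P) Q) (hQ : Q ∈ feas P) :
    Hat α θ P = objF α θ P Q := by
  rw [Hat_eq_sSup]
  exact IsGreatest.csSup_eq ⟨Set.mem_image_of_mem _ hQ,
    by rintro v ⟨R, hRm, rfl⟩; exact hmax hRm⟩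

lemma le_Hat {θ : Fin k → ℝ} {P : (∀ i, 𝒳 i) → ℝ} (hPne : P ≠ 0) {Q : (∀ i, 𝒳 i) → ℝ}
    (hQ : Q ∈ feas P) (α : ℝ) : objF α θ P Q ≤ Hat α θ P := by
  obtain ⟨Qm, hQm, hmax⟩ := exists_max θ P hPne α
  rw [Hat_eq_max hmax hQm]
  exact hmax hQ

lemma max_unique {θ : Fin k → ℝ} (hθ0 : ∀ j, 0 ≤ θ j) {α : ℝ} (hα : α ∈ Set.Ioo (0:ℝ) 1)
    {P Q R : (∀ i, 𝒳 i) → ℝ} (hQ : Q ∈ feas P) (hR : R ∈ feas P)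
    (hQm : IsMaxOn (objF α θ P) (feas P) Q) (hRm : IsMaxOn (objF α θ P) (feas P) R) :
    Q = R := by
  by_contra hne
  have hm : (1/2 : ℝ) • Q + (1/2 : ℝ) • R ∈ feas P :=
    convex_feas P hQ hR (by norm_num) (by norm_num) (by norm_num)
  have h := objF_combo hθ0 hα hQ hR hne (by norm_num : (0:ℝ) < 1/2)
    (by norm_num : (0:ℝ) < 1/2) (by norm_num)
  have h1 : objF α θ P ((1/2 : ℝ) • Q + (1/2 : ℝ) • R) ≤ objF α θ P Q := hQm hm
  have h2 : objF α θ P Q ≤ objF α θ P R := hRm hQ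
  have h3 : objF α θ P R ≤ objF α θ P Q := hQm hR
  linarith

end Stmt9Aux
section Main

open Stmt9Aux Filter

/-- for `α ∈ (0,1)` the maximizer in the definition of `H_{α,θ}(P)` is
unique, and if `Q₀` minimizes `D(·‖P)` over the set `M` of maximizers at `α = 0`, then
the right derivative of `α ↦ H_{α,θ}(P)` at `α = 0` equals `−D(Q₀‖P)`. -/
theorem stmt9 {k : ℕ} (hk : 1 ≤ k) (𝒳 : Fin k → Type)
    [∀ i, Fintype (𝒳 i)] [∀ i, DecidableEq (𝒳 i)]
    (θ : Fin k → ℝ) (hθ : probVec θ)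
    (P : (∀ i, 𝒳 i) → ℝ) (hP0 : ∀ x, 0 ≤ P x) (hPne : P ≠ 0)
    (M : Set ((∀ i, 𝒳 i) → ℝ))
    (hM : M = { Q | probVec Q ∧ (∀ x, P x = 0 → Q x = 0) ∧
      (∑ j, θ j * shEnt (marg Q j)) = Hat 0 θ P })
    (Q0 : (∀ i, 𝒳 i) → ℝ) (hQ0M : Q0 ∈ M) (hQ0min : ∀ Q ∈ M, klD Q0 P ≤ klD Q P) :
    (∀ α ∈ Set.Ioo (0 : ℝ) 1, ∃! Q : (∀ i, 𝒳 i) → ℝ,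
      probVec Q ∧ (∀ x, P x = 0 → Q x = 0) ∧
      (∑ j, θ j * shEnt (marg Q j)) - α / (1 - α) * klD Q P = Hat α θ P) ∧
    HasDerivWithinAt (fun α : ℝ => Hat α θ P) (-(klD Q0 P)) (Set.Ioi 0) 0 := by
  classical
  obtain ⟨hθ0, hθ1⟩ := hθ
  rw [hM] at hQ0M
  have hQ0feas : Q0 ∈ feas P := ⟨hQ0M.1, hQ0M.2.1⟩
  have hQ0E : entF θ Q0 = Hat 0 θ P := by
    simpa only [entF] using hQ0M.2.2
  obtain ⟨B, hB⟩ := (isCompact_feas P).exists_bound_of_continuousOn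
      (continuous_klD P).continuousOn
  choose Qs hQsfeas hQsmax using fun α : ℝ => exists_max θ P hPne α
  have hIoo : Set.Ioo (0:ℝ) 1 ∈ nhdsWithin (0:ℝ) (Set.Ioi 0) :=
    Ioo_mem_nhdsGT zero_lt_one
  have hEle : ∀ Q ∈ feas P, entF θ Q ≤ Hat 0 θ P := by
    intro Q hQ
    have := le_Hat (θ := θ) hPne hQ 0
    rwa [objF_zero] at this
  have hc_pos : ∀ α ∈ Set.Ioo (0:ℝ) 1, 0 < α / (1 - α) :=
    fun α hα => div_pos hα.1 (by linarith [hα.2])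
  constructor
  · -- Part 1: uniqueness of the maximizer
    intro α hα
    have hHatα := Hat_eq_max (hQsmax α) (hQsfeas α)
    refine ⟨Qs α, ⟨(hQsfeas α).1, (hQsfeas α).2, ?_⟩, ?_⟩
    · have := hHatα.symm
      simpa only [objF, entF] using this
    · rintro R ⟨hR1, hR2, hReq⟩
      have hRfeas : R ∈ feas P := ⟨hR1, hR2⟩
      have hReq' : objF α θ P R = Hat α θ P := by
        simpa only [objF, entF] using hReq
      have hRmax : IsMaxOn (objF α θ P) (feas P) R := by
        intro S hS
        have h1 := le_Hat (θ := θ) hPne hS α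
        show objF α θ P S ≤ objF α θ P R
        rw [hReq']
        exact h1
      exact max_unique hθ0 hα hRfeas (hQsfeas α) hRmax (hQsmax α)
  · -- Part 2: right derivative at 0
    set D0 := klD Q0 P with hD0def
    -- lower bound on the slope
    have hlower : ∀ α ∈ Set.Ioo (0:ℝ) 1,
        -D0 / (1 - α) ≤ (Hat α θ P - Hat 0 θ P) / α := by
      intro α hα
      have hα0 : α ≠ 0 := ne_of_gt hα.1
      have h1α : (1:ℝ) - α ≠ 0 := by intro h; have := hα.2; nlinarith
      have h1 : objF α θ P Q0 ≤ Hat α θ P := le_Hat hPne hQ0feas α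
      have h2 : objF α θ P Q0 = Hat 0 θ P - α / (1 - α) * D0 := by
        unfold objF
        rw [hQ0E]
      have he : -D0 / (1 - α) = (-(α / (1 - α) * D0)) / α := by
        field_simp
      rw [he]
      exact (div_le_div_iff_of_pos_right hα.1).2 (by linarith)
    -- upper bound on the slope
    have hupper : ∀ α ∈ Set.Ioo (0:ℝ) 1,
        (Hat α θ P - Hat 0 θ P) / α ≤ -(klD (Qs α) P) / (1 - α) := by
      intro α hα
      have hα0 : α ≠ 0 := ne_of_gt hα.1
      have h1α : (1:ℝ) - α ≠ 0 := by intro h; have := hα.2; nlinarith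
      have hHatα : Hat α θ P = objF α θ P (Qs α) := Hat_eq_max (hQsmax α) (hQsfeas α)
      have hE : entF θ (Qs α) ≤ Hat 0 θ P := hEle (Qs α) (hQsfeas α)
      have he : -(klD (Qs α) P) / (1 - α) = (-(α / (1 - α) * klD (Qs α) P)) / α := by
        field_simp
      rw [he]
      refine (div_le_div_iff_of_pos_right hα.1).2 ?_
      have : Hat α θ P = entF θ (Qs α) - α / (1 - α) * klD (Qs α) P := hHatα
      linarith
    -- claim D : eventually klD (Qs α) P ≥ D0 - ε
    have claimD : ∀ ε : ℝ, 0 < ε →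
        ∀ᶠ α in nhdsWithin (0:ℝ) (Set.Ioi 0), D0 - ε ≤ klD (Qs α) P := by
      intro ε hε
      by_cases hKe : (feas P ∩ {Q | klD Q P ≤ D0 - ε}).Nonempty
      · have hKcomp : IsCompact (feas P ∩ {Q | klD Q P ≤ D0 - ε}) :=
          (isCompact_feas P).inter_right (isClosed_le (continuous_klD P) continuous_const)
        obtain ⟨Qe, hQe, hQemax⟩ := hKcomp.exists_isMaxOn hKe (continuous_entF θ).continuousOn
        have hQelt : entF θ Qe < Hat 0 θ P := by
          refine lt_of_le_of_ne (hEle Qe hQe.1) fun heq => ?_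
          have hQeM : Qe ∈ M := by
            rw [hM]
            exact ⟨hQe.1.1, hQe.1.2, by simpa only [entF] using heq⟩
          have h1 := hQ0min Qe hQeM
          have h2 := hQe.2
          simp only [Set.mem_setOf_eq] at h2
          rw [hM] at hQeM
          linarith
        set δ := Hat 0 θ P - entF θ Qe with hδdef
        have hδ : 0 < δ := by simp only [hδdef]; linarith
        have htend : Tendsto (fun α : ℝ => 2 * (α / (1 - α)) * B)
            (nhdsWithin (0:ℝ) (Set.Ioi 0)) (nhds 0) := by
          have hca : ContinuousAt (fun α : ℝ => 2 * (α / (1 - α)) * B) 0 := by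
            have : ContinuousAt (fun α : ℝ => (1:ℝ) - α) 0 :=
              (continuous_const.sub continuous_id).continuousAt
            exact ((continuousAt_const.mul (continuousAt_id.div this (by norm_num))).mul
              continuousAt_const)
          have := hca.tendsto
          norm_num at this
          exact this.mono_left nhdsWithin_le_nhds
        have hev1 : ∀ᶠ α in nhdsWithin (0:ℝ) (Set.Ioi 0), 2 * (α / (1 - α)) * B < δ :=
          htend.eventually (gt_mem_nhds hδ)
        filter_upwards [hev1, hIoo] with α h2cB hα
        by_contra hcon
        push_neg at hcon
        have hQsKε : Qs α ∈ feas P ∩ {Q | klD Q P ≤ D0 - ε} := ⟨hQsfeas α, hcon.le⟩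
        have hE : entF θ (Qs α) ≤ entF θ Qe := hQemax hQsKε
        have hobj : objF α θ P Q0 ≤ objF α θ P (Qs α) := hQsmax α hQ0feas
        have hc := hc_pos α hα
        have hBa := hB (Qs α) (hQsfeas α)
        have hBb := hB Q0 hQ0feas
        rw [Real.norm_eq_abs, abs_le] at hBa hBb
        have m1 : α / (1 - α) * klD Q0 P ≤ α / (1 - α) * B :=
          mul_le_mul_of_nonneg_left hBb.2 hc.le
        have m2 : α / (1 - α) * (-B) ≤ α / (1 - α) * klD (Qs α) P :=
          mul_le_mul_of_nonneg_left hBa.1 hc.le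
        unfold objF at hobj
        rw [hQ0E] at hobj
        have hδeq : entF θ Qe = Hat 0 θ P - δ := by simp only [hδdef]; ring
        rw [hδeq] at hE
        have hm2 : -(α / (1 - α) * B) ≤ α / (1 - α) * klD (Qs α) P := by
          have : α / (1 - α) * (-B) = -(α / (1 - α) * B) := by ring
          linarith [m2]
        linarith
      · filter_upwards [hIoo] with α hα
        by_contra hcon
        push_neg at hcon
        exact hKe ⟨Qs α, hQsfeas α, hcon.le⟩
    -- concluding the tendsto
    have hfinal : Tendsto (fun α => (Hat α θ P - Hat 0 θ P) / α)
        (nhdsWithin (0:ℝ) (Set.Ioi 0)) (nhds (-D0)) := by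
      refine tendsto_order.2 ⟨?_, ?_⟩
      · intro b hb
        have htl : Tendsto (fun α : ℝ => -D0 / (1 - α))
            (nhdsWithin (0:ℝ) (Set.Ioi 0)) (nhds (-D0)) := by
          have hca : ContinuousAt (fun α : ℝ => -D0 / (1 - α)) 0 := by
            have h1 : ContinuousAt (fun α : ℝ => (1:ℝ) - α) 0 :=
              (continuous_const.sub continuous_id).continuousAt
            exact continuousAt_const.div h1 (by norm_num)
          have := hca.tendsto
          norm_num at this
          exact this.mono_left nhdsWithin_le_nhds
        filter_upwards [htl.eventually (lt_mem_nhds hb), hIoo] with α h1 h2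
        exact lt_of_lt_of_le h1 (hlower α h2)
      · intro b hb
        set ε := (b + D0) / 2 with hεdef
        have hεpos : 0 < ε := by simp only [hεdef]; linarith
        have hεb : ε - D0 < b := by simp only [hεdef]; linarith
        have htu : Tendsto (fun α : ℝ => (ε - D0) / (1 - α))
            (nhdsWithin (0:ℝ) (Set.Ioi 0)) (nhds (ε - D0)) := by
          have hca : ContinuousAt (fun α : ℝ => (ε - D0) / (1 - α)) 0 := by
            have h1 : ContinuousAt (fun α : ℝ => (1:ℝ) - α) 0 :=
              (continuous_const.sub continuous_id).continuousAt
            exact continuousAt_const.div h1 (by norm_num)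
          have := hca.tendsto
          norm_num at this
          exact this.mono_left nhdsWithin_le_nhds
        filter_upwards [htu.eventually (gt_mem_nhds hεb), claimD ε hεpos, hIoo]
          with α h1 h2 h3
        have h4 := hupper α h3
        have h5 : -(klD (Qs α) P) ≤ ε - D0 := by linarith
        have h6 : -(klD (Qs α) P) / (1 - α) ≤ (ε - D0) / (1 - α) :=
          (div_le_div_iff_of_pos_right (by linarith [h3.2] : (0:ℝ) < 1 - α)).2 h5
        linarith
    rw [hasDerivWithinAt_iff_tendsto_slope,
      Set.diff_singleton_eq_self Set.notMem_Ioi_self]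
    have hsl : slope (fun α : ℝ => Hat α θ P) 0 = fun α => (Hat α θ P - Hat 0 θ P) / α := by
      funext α
      rw [slope_def_field]
      simp
    rw [hsl]
    exact hfinal

end Main
end
end
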